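/- arXiv:2101.06501 — 8 statements merged into one kernel-verified Lean document; each statement's English description precedes it below -/
import Mathlib

section
/- Let F be a (p+)-filter on E. Whenever ⟨X_a⃗⟩ ∈ F for every a⃗ ∈ FIN^[<∞], there is ⟨X⟩ ∈ F such that X/a⃗ ⪯ X_a⃗ for every a⃗ ∈ FIN^[<∞] which is a finite initial segment of supp(X). -/
namespace BlockPaper

variable {F : Type} [Field F]

/-- `X` is an infinite block sequence in `E = ⊕ₙ F`. -/
def IsBlock (X : ℕ → (ℕ →₀ F)) : Prop :=
  (∀ n, X n ≠ 0) ∧ ∀ n, ∀ i ∈ (X n).support, ∀ j ∈ (X (n + 1)).support, i < j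

/-- `⟨X⟩`: the linear span of the entries of `X`, with `0` removed. -/
def spanSet (X : ℕ → (ℕ →₀ F)) : Set (ℕ →₀ F) :=
  {v | v ≠ 0 ∧ v ∈ Submodule.span F (Set.range X)}

/-- `⟨X/n⟩`: the span (minus `0`) of the entries of `X` whose supports lie entirely above `n`. -/
def tailSpanSet (X : ℕ → (ℕ →₀ F)) (n : ℕ) : Set (ℕ →₀ F) :=
  {v | v ≠ 0 ∧ v ∈ Submodule.span F {x : ℕ →₀ F | (∃ k, X k = x) ∧ ∀ i ∈ x.support, n < i}}

/-- `X ⪯ Y`. -/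
def PLE (X Y : ℕ → (ℕ →₀ F)) : Prop := spanSet X ⊆ spanSet Y

/-- `X ⪯* Y`. -/
def PLEs (X Y : ℕ → (ℕ →₀ F)) : Prop := ∃ n, tailSpanSet X n ⊆ spanSet Y

/-- A block filter on `E`: a proper filter of subsets of `E ∖ {0}` containing all
finite-codimensional subspaces (minus `0`) and with a base of sets `⟨X⟩`, `X ∈ E^[∞]`. -/
structure BlockFilter (F : Type) [Field F] where
  sets : Set (Set (ℕ →₀ F))
  nonzero : ∀ S ∈ sets, ∀ v ∈ S, v ≠ 0
  proper : ∅ ∉ sets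
  upward : ∀ S ∈ sets, ∀ T : Set (ℕ →₀ F), (∀ v ∈ T, v ≠ 0) → S ⊆ T → T ∈ sets
  inter : ∀ S ∈ sets, ∀ T ∈ sets, S ∩ T ∈ sets
  codim : ∀ V : Submodule F (ℕ →₀ F), Module.Finite F ((ℕ →₀ F) ⧸ V) →
    {v : ℕ →₀ F | v ≠ 0 ∧ v ∈ V} ∈ sets
  blockBase : ∀ S ∈ sets, ∃ X : ℕ → (ℕ →₀ F),
    IsBlock X ∧ spanSet X ∈ sets ∧ spanSet X ⊆ S

/-- `D ⊆ E` is `𝓕`-dense. -/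
def FDense (𝓕 : BlockFilter F) (D : Set (ℕ →₀ F)) : Prop :=
  ∀ X : ℕ → (ℕ →₀ F), IsBlock X → spanSet X ∈ 𝓕.sets →
    ∃ V : Submodule F (ℕ →₀ F), ¬ Module.Finite F V ∧
      (V : Set (ℕ →₀ F)) \ {0} ⊆ spanSet X ∩ D

/-- `𝓕` is full: every `𝓕`-dense set belongs to `𝓕`. -/
def Full (𝓕 : BlockFilter F) : Prop :=
  ∀ D : Set (ℕ →₀ F), FDense 𝓕 D → D \ {0} ∈ 𝓕.sets

/-- `𝓕` is a `(p)`-filter. -/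
def PFilter (𝓕 : BlockFilter F) : Prop :=
  ∀ Xs : ℕ → ℕ → (ℕ →₀ F), (∀ n, IsBlock (Xs n) ∧ spanSet (Xs n) ∈ 𝓕.sets) →
    ∃ X : ℕ → (ℕ →₀ F), IsBlock X ∧ spanSet X ∈ 𝓕.sets ∧ ∀ n, PLEs X (Xs n)

/-- `𝓕` is a `(p⁺)`-filter: full and a `(p)`-filter. -/
def PPlus (𝓕 : BlockFilter F) : Prop := Full 𝓕 ∧ PFilter 𝓕

/-- A finite block sequence in `E`, as a list. -/
def IsBlockList (l : List (ℕ →₀ F)) : Prop :=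
  (∀ v ∈ l, v ≠ 0) ∧
    l.Chain' (fun u v : ℕ →₀ F => ∀ i ∈ u.support, ∀ j ∈ v.support, i < j)

/-- `𝓕` is a strong `(p)`-filter: any family `(X_x⃗)` indexed by finite block sequences,
with each `⟨X_x⃗⟩ ∈ 𝓕`, has a diagonalization `X` with `X/x⃗ ⪯ X_x⃗` for all finite initial
segments `x⃗` of `X`. -/
def StrongP (𝓕 : BlockFilter F) : Prop :=
  ∀ Xs : List (ℕ →₀ F) → ℕ → (ℕ →₀ F),
    (∀ l, IsBlockList l → IsBlock (Xs l) ∧ spanSet (Xs l) ∈ 𝓕.sets) →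
    ∃ X : ℕ → (ℕ →₀ F), IsBlock X ∧ spanSet X ∈ 𝓕.sets ∧
      ∀ k : ℕ, PLE (fun m => X (m + k)) (Xs (List.ofFn fun i : Fin k => X i))

/-- The outcome of a strategy (for II) against a sequence of opposing moves:
the `k`-th value is the strategy applied to the first `k+1` opposing moves. -/
def outcomeOf {α β : Type*} (st : List α → β) (Ys : ℕ → α) : ℕ → β :=
  fun k => st (List.ofFn fun i : Fin (k + 1) => Ys i)

/-- A legal move for player I in the Gowers game `G[X]`. -/
def LegalG (X Y : ℕ → (ℕ →₀ F)) : Prop := IsBlock Y ∧ PLE Y X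

/-- A legal move for player I in the restricted Gowers game `G_𝓕[X]`. -/
def LegalGF (𝓕 : BlockFilter F) (X Y : ℕ → (ℕ →₀ F)) : Prop :=
  IsBlock Y ∧ PLE Y X ∧ spanSet Y ∈ 𝓕.sets

/-- `α` is a strategy for player II in a Gowers-type game whose legal moves for I are
given by `legal`: against any sequence of legal I-moves, the outcome is a block
sequence whose `k`-th entry lies in the span of I's `k`-th move. -/
def IsStratII (legal : (ℕ → (ℕ →₀ F)) → Prop)
    (α : List (ℕ → (ℕ →₀ F)) → (ℕ →₀ F)) : Prop :=
  ∀ Ys : ℕ → ℕ → (ℕ →₀ F), (∀ k, legal (Ys k)) →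
    IsBlock (outcomeOf α Ys) ∧ ∀ k, outcomeOf α Ys k ∈ spanSet (Ys k)

/-- `𝓕` is strategic. -/
def Strategic (𝓕 : BlockFilter F) : Prop :=
  ∀ X : ℕ → (ℕ →₀ F), IsBlock X → spanSet X ∈ 𝓕.sets →
    ∀ α, IsStratII (LegalG X) α →
      ∃ Ys : ℕ → ℕ → (ℕ →₀ F), (∀ k, LegalG X (Ys k)) ∧
        spanSet (outcomeOf α Ys) ∈ 𝓕.sets

/-- `𝓕` is `+`-strategic. -/
def PlusStrategic (𝓕 : BlockFilter F) : Prop :=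
  ∀ X : ℕ → (ℕ →₀ F), IsBlock X → spanSet X ∈ 𝓕.sets →
    ∀ α, IsStratII (LegalGF 𝓕 X) α →
      ∃ Ys : ℕ → ℕ → (ℕ →₀ F), (∀ k, LegalGF 𝓕 X (Ys k)) ∧
        spanSet (outcomeOf α Ys) ∈ 𝓕.sets

/-- A legal finite position (list of II's moves so far) in a play where I follows `σ`. -/
def LegalPos (σ : List (ℕ →₀ F) → ℕ → (ℕ →₀ F)) (l : List (ℕ →₀ F)) : Prop :=
  IsBlockList l ∧ ∀ k, (h : k < l.length) → l.get ⟨k, h⟩ ∈ spanSet (σ (l.take k))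

/-- `σ` is a strategy for player I in the restricted Gowers game `G_𝓕[X]`. -/
def IsStratIGF (𝓕 : BlockFilter F) (X : ℕ → (ℕ →₀ F))
    (σ : List (ℕ →₀ F) → ℕ → (ℕ →₀ F)) : Prop :=
  ∀ l, LegalPos σ l → LegalGF 𝓕 X (σ l)

/-- `ys` is (the sequence of II's moves of) an infinite play against I's strategy `σ`
in a Gowers-type game; its outcome is `ys` itself. -/
def PlayAgainstI (σ : List (ℕ →₀ F) → ℕ → (ℕ →₀ F)) (ys : ℕ → (ℕ →₀ F)) : Prop :=
  IsBlock ys ∧ ∀ k, ys k ∈ spanSet (σ (List.ofFn fun i : Fin k => ys i))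

/-- `ys` is an infinite play against I's strategy `σ` in the asymptotic game `F[X]`. -/
def PlayAgainstIAsymp (X : ℕ → (ℕ →₀ F)) (σ : List (ℕ →₀ F) → ℕ)
    (ys : ℕ → (ℕ →₀ F)) : Prop :=
  IsBlock ys ∧ ∀ k, ys k ∈ spanSet X ∧
    ∀ i ∈ (ys k).support, σ (List.ofFn fun j : Fin k => ys j) < i

/-- `FIN`: nonempty finite subsets of `ℕ`. -/
abbrev FIN := {s : Finset ℕ // s.Nonempty}

/-- An infinite block sequence in `FIN`. -/
def IsBlockF (A : ℕ → Finset ℕ) : Prop :=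
  (∀ n, (A n).Nonempty) ∧ ∀ n, ∀ i ∈ A n, ∀ j ∈ A (n + 1), i < j

/-- `⟨A⟩`: unions of finitely many (at least one) entries of `A`. -/
def finUnions (A : ℕ → Finset ℕ) : Set (Finset ℕ) :=
  {b | ∃ G : Finset ℕ, G.Nonempty ∧ b = G.sup A}

/-- `⟨A/n⟩`: unions of finitely many entries of `A` contained in `(n, ∞)`. -/
def finUnionsAbove (A : ℕ → Finset ℕ) (n : ℕ) : Set (Finset ℕ) :=
  {b | ∃ G : Finset ℕ, G.Nonempty ∧ (∀ k ∈ G, ∀ i ∈ A k, n < i) ∧ b = G.sup A}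

/-- `A ⪯ B` in `FIN`. -/
def PLEF (A B : ℕ → Finset ℕ) : Prop := finUnions A ⊆ finUnions B

/-- `A ⪯* B` in `FIN`. -/
def PLEsF (A B : ℕ → Finset ℕ) : Prop := ∃ n, finUnionsAbove A n ⊆ finUnions B

/-- Lift a set of finite subsets of `ℕ` to a set of elements of `FIN`. -/
def liftFIN (S : Set (Finset ℕ)) : Set FIN := {a | (a : Finset ℕ) ∈ S}

/-- `U` is an ordered-union ultrafilter on `FIN`. -/
def OrderedUnion (U : Ultrafilter FIN) : Prop :=
  ∀ S ∈ U, ∃ A : ℕ → Finset ℕ, IsBlockF A ∧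
    liftFIN (finUnions A) ∈ U ∧ liftFIN (finUnions A) ⊆ S

/-- `U` is stable. -/
def Stable (U : Ultrafilter FIN) : Prop :=
  ∀ As : ℕ → ℕ → Finset ℕ, (∀ n, IsBlockF (As n) ∧ liftFIN (finUnions (As n)) ∈ U) →
    ∃ B : ℕ → Finset ℕ, IsBlockF B ∧ liftFIN (finUnions B) ∈ U ∧ ∀ n, PLEsF B (As n)

/-- `supp(X)`: the sequence of supports of the entries of `X`. -/
def suppSeq (X : ℕ → (ℕ →₀ F)) : ℕ → Finset ℕ := fun k => (X k).support

/-- `supp(𝓕)`: the collection of `A ⊆ FIN` containing `{supp v : v ∈ S}` for some `S ∈ 𝓕`. -/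
def suppFilter (𝓕 : BlockFilter F) : Set (Set FIN) :=
  {A | ∃ S ∈ 𝓕.sets, ∀ a : FIN, (∃ v ∈ S, (a : Finset ℕ) = v.support) → a ∈ A}

/-- A finite block sequence in `FIN`, as a list. -/
def IsBlockListF (l : List (Finset ℕ)) : Prop :=
  (∀ a ∈ l, a.Nonempty) ∧
    l.Chain' (fun a b : Finset ℕ => ∀ i ∈ a, ∀ j ∈ b, i < j)

end BlockPaper

/-!
By the `(p)`-property there is `⟨Y⟩ ∈ 𝓕` with `Y/n(a⃗) ⪯ X_a⃗` for every finite block sequence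
`a⃗` in `FIN`; fix a monotone `N` with `n(a⃗) ≤ N m` whenever `a⃗` lives in `[0, m]`. It then
suffices to find `⟨W⟩ ∈ 𝓕` inside `⟨Y⟩ ∩ ⟨X_∅⟩` whose consecutive supports are `N`-separated,
`N (max supp w_j) < min supp w_{j+1}`. This is forced by a parity count: `nearCount N s` counts
the `j ∈ s` whose successor in `s` is at most `N j`. The vectors with even `nearCount` of their
support are `𝓕`-dense: inside any block sequence pass to an `N`-spread subsequence and add up
pairs of entries of equal parity; every vector spanned by these sums has even `nearCount`. By
fullness some `⟨W⟩ ∈ 𝓕` consists of such vectors, and if `w_j` and `w_{j+1}` were not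
`N`-separated, then `w_j + w_{j+1}` would have odd `nearCount`.
-/

namespace BlockPaper

open Finset Function

variable {F : Type} [Field F] {N : ℕ → ℕ}

def Spread (N : ℕ → ℕ) (s : ℕ → Finset ℕ) : Prop :=
  ∀ ⦃m n⦄, m < n → ∀ a ∈ s m, ∀ b ∈ s n, a < b ∧ N a < b

lemma spread_of_succ (hN : Monotone N) {s : ℕ → Finset ℕ} (hs : ∀ n, (s n).Nonempty)
    (h : ∀ n, ∀ a ∈ s n, ∀ b ∈ s (n + 1), a < b ∧ N a < b) : Spread N s := by
  intro m n hmn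
  induction n, hmn using Nat.le_induction with
  | base => exact h m
  | succ n _ ih =>
    intro a ha b hb
    obtain ⟨c, hc⟩ := hs n
    obtain ⟨hac, -⟩ := ih a ha c hc
    obtain ⟨hcb, hNcb⟩ := h n c hc b hb
    exact ⟨hac.trans hcb, (hN hac.le).trans_lt hNcb⟩

def nearCount (N : ℕ → ℕ) (s : Finset ℕ) : ℕ := #{j ∈ s | ∃ i ∈ s, j < i ∧ i ≤ N j}

lemma nearCount_union (hN : Monotone N) {s t : Finset ℕ} (hst : ∀ a ∈ s, ∀ b ∈ t, a < b) :
    nearCount N (s ∪ t) = nearCount N s + nearCount N t +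
      if ∃ a ∈ s, ∃ b ∈ t, b ≤ N a then 1 else 0 := by
  rcases s.eq_empty_or_nonempty with rfl | hs
  · simp [nearCount]
  set m := s.max' hs
  have hm : m ∈ s := max'_mem s hs
  have hdisj : Disjoint s t := disjoint_left.2 fun a ha hat => (hst a ha a hat).false
  have right : {j ∈ t | ∃ i ∈ s ∪ t, j < i ∧ i ≤ N j} = {j ∈ t | ∃ i ∈ t, j < i ∧ i ≤ N j} :=
    filter_congr fun j hj =>
      ⟨fun ⟨i, hi, hji⟩ => ⟨i, (mem_union.1 hi).resolve_left
          fun his => (hst i his j hj).not_gt hji.1, hji⟩,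
        fun ⟨i, hi, hji⟩ => ⟨i, mem_union_right s hi, hji⟩⟩
  -- only the last element `m` of `s` can acquire a near successor in `t`
  have left : {j ∈ s | ∃ i ∈ s ∪ t, j < i ∧ i ≤ N j} =
      {j ∈ s | ∃ i ∈ s, j < i ∧ i ≤ N j} ∪
        {j ∈ s | j = m ∧ ∃ a ∈ s, ∃ b ∈ t, b ≤ N a} := by
    rw [← filter_or]
    refine filter_congr fun j hj => ⟨fun ⟨i, hi, hji, hiN⟩ => ?_, ?_⟩
    · rcases mem_union.1 hi with his | hit
      · exact .inl ⟨i, his, hji, hiN⟩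
      rcases (le_max' s j hj).eq_or_lt with hjm | hjm
      · exact .inr ⟨hjm, j, hj, i, hit, hiN⟩
      · exact .inl ⟨m, hm, hjm, ((hst m hm i hit).le.trans hiN)⟩
    · rintro (⟨i, hi, hji⟩ | ⟨rfl, a, ha, b, hb, hbN⟩)
      · exact ⟨i, mem_union_left t hi, hji⟩
      · exact ⟨b, mem_union_right s hb, hst _ hm b hb, hbN.trans (hN (le_max' s a ha))⟩
  have hlast : Disjoint {j ∈ s | ∃ i ∈ s, j < i ∧ i ≤ N j}
      {j ∈ s | j = m ∧ ∃ a ∈ s, ∃ b ∈ t, b ≤ N a} := by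
    refine disjoint_filter.2 fun j _ ⟨i, hi, hji, _⟩ ⟨hjm, _⟩ => ?_
    exact (le_max' s i hi).not_gt (by rwa [hjm] at hji)
  rw [nearCount, filter_union, card_union_of_disjoint (disjoint_filter_filter hdisj), left, right,
    card_union_of_disjoint hlast, nearCount, nearCount]
  split_ifs with hnear
  · simp [filter_eq', hm, hnear]; omega
  · simp [hnear]

lemma nearCount_union_of_forall_lt (hN : Monotone N) {s t : Finset ℕ}
    (hst : ∀ a ∈ s, ∀ b ∈ t, a < b ∧ N a < b) :
    nearCount N (s ∪ t) = nearCount N s + nearCount N t := by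
  rw [nearCount_union hN fun a ha b hb => (hst a ha b hb).1,
    if_neg fun ⟨a, ha, b, hb, hbN⟩ => hbN.not_gt (hst a ha b hb).2, add_zero]

lemma Spread.even_nearCount_biUnion (hN : Monotone N) {s : ℕ → Finset ℕ} (hs : Spread N s)
    (hev : ∀ k, Even (nearCount N (s k))) (K : Finset ℕ) : Even (nearCount N (K.biUnion s)) := by
  induction K using Finset.induction_on_min with
  | empty => simp [nearCount]
  | insert k K hkK ih =>
    rw [biUnion_insert, nearCount_union_of_forall_lt hN]
    · exact (hev k).add ih
    · intro a ha b hb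
      obtain ⟨k', hk', hb⟩ := mem_biUnion.1 hb
      exact hs (hkK k' hk') a ha b hb

lemma pairwise_disjoint_of_forall_lt {s : ℕ → Finset ℕ}
    (h : ∀ ⦃m n⦄, m < n → ∀ a ∈ s m, ∀ b ∈ s n, a < b) : Pairwise (Disjoint on s) :=
  (pairwise_disjoint_on s).2 fun _ _ hmn => disjoint_left.2 fun a ha hb => (h hmn a ha a hb).false

lemma Spread.pairwise_disjoint {s : ℕ → Finset ℕ} (hs : Spread N s) :
    Pairwise (Disjoint on s) :=
  pairwise_disjoint_of_forall_lt fun _ _ hmn a ha b hb => (hs hmn a ha b hb).1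

lemma support_sum_smul_of_pairwise_disjoint {ι α : Type*} [DecidableEq α] {w : ι → α →₀ F}
    (hw : Pairwise (Disjoint on fun i => (w i).support)) (c : ι →₀ F) :
    (c.sum fun i a => a • w i).support = c.support.biUnion fun i => (w i).support := by
  rw [Finsupp.sum, Finsupp.support_sum_eq_biUnion _ fun i j hij =>
    (hw hij).mono Finsupp.support_smul Finsupp.support_smul]
  exact biUnion_congr rfl fun i hi => Finsupp.support_smul_eq (Finsupp.mem_support_iff.1 hi)

lemma linearIndependent_of_pairwise_disjoint_support {ι α : Type*} {w : ι → α →₀ F}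
    (hw0 : ∀ i, w i ≠ 0) (hw : Pairwise (Disjoint on fun i => (w i).support)) :
    LinearIndependent F w := by
  classical
  refine linearIndependent_iff.2 fun c hc => Finsupp.support_eq_empty.1 ?_
  have hsupp := support_sum_smul_of_pairwise_disjoint hw c
  rw [← Finsupp.linearCombination_apply, hc, Finsupp.support_zero, eq_comm] at hsupp
  refine eq_empty_of_forall_notMem fun i hi => ?_
  obtain ⟨x, hx⟩ := Finsupp.support_nonempty_iff.2 (hw0 i)
  exact notMem_empty x (hsupp ▸ mem_biUnion.2 ⟨i, hi, hx⟩)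

namespace IsBlock

variable {X : ℕ → ℕ →₀ F}

lemma support_nonempty (hX : IsBlock X) (n : ℕ) : (X n).support.Nonempty :=
  Finsupp.support_nonempty_iff.2 (hX.1 n)

lemma mem_spanSet (hX : IsBlock X) (n : ℕ) : X n ∈ spanSet X :=
  ⟨hX.1 n, Submodule.subset_span ⟨n, rfl⟩⟩

lemma lt_of_lt (hX : IsBlock X) ⦃m n : ℕ⦄ (hmn : m < n) :
    ∀ a ∈ (X m).support, ∀ b ∈ (X n).support, a < b := by
  induction n, hmn using Nat.le_induction with
  | base => exact hX.2 m
  | succ n _ ih =>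
    intro a ha b hb
    obtain ⟨c, hc⟩ := hX.support_nonempty n
    exact (ih a ha c hc).trans (hX.2 n c hc b hb)

lemma pairwise_disjoint (hX : IsBlock X) : Pairwise (Disjoint on fun n => (X n).support) :=
  pairwise_disjoint_of_forall_lt hX.lt_of_lt

lemma le_of_mem_support (hX : IsBlock X) {n b : ℕ} (hb : b ∈ (X n).support) : n ≤ b := by
  induction n generalizing b with
  | zero => exact Nat.zero_le b
  | succ n ih =>
    obtain ⟨c, hc⟩ := hX.support_nonempty n
    exact (ih hc).trans_lt (hX.2 n c hc b hb)

lemma le_max'_of_le (hX : IsBlock X) {i k a : ℕ} (hik : i ≤ k) (ha : a ∈ (X i).support) :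
    a ≤ (X k).support.max' (hX.support_nonempty k) := by
  rcases hik.lt_or_eq with hik | rfl
  · exact (hX.lt_of_lt hik a ha _ (max'_mem _ _)).le
  · exact le_max' _ a ha

lemma isBlockListF_ofFn (hX : IsBlock X) (k : ℕ) :
    IsBlockListF (List.ofFn fun i : Fin k => (X i).support) := by
  refine ⟨fun a ha => ?_, ?_⟩
  · obtain ⟨i, rfl⟩ := List.mem_ofFn.1 ha
    exact hX.support_nonempty i
  · rw [List.Chain', List.isChain_ofFn]
    exact fun i _ => hX.2 i

lemma mem_tailSpanSet (hX : IsBlock X) {v : ℕ →₀ F} {n : ℕ} (hv : v ∈ spanSet X)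
    (habove : ∀ i ∈ v.support, n < i) : v ∈ tailSpanSet X n := by
  classical
  obtain ⟨hv0, hvX⟩ := hv
  refine ⟨hv0, ?_⟩
  obtain ⟨c, rfl⟩ := Finsupp.mem_span_range_iff_exists_finsupp.1 hvX
  have hsupp := support_sum_smul_of_pairwise_disjoint hX.pairwise_disjoint c
  refine Submodule.sum_mem _ fun k hk => Submodule.smul_mem _ _
    (Submodule.subset_span ⟨⟨k, rfl⟩, fun i hi => habove i ?_⟩)
  rw [hsupp]
  exact mem_biUnion.2 ⟨k, hk, hi⟩

lemma exists_spread_comp (hN : Monotone N) (hX : IsBlock X) :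
    ∃ t : ℕ → ℕ, Spread N (suppSeq (X ∘ t)) := by
  let t : ℕ → ℕ := fun r => Nat.rec 0 (fun _ tr => tr + 1 + (X tr).support.sup N) r
  have ht (r : ℕ) : t (r + 1) = t r + 1 + (X (t r)).support.sup N := rfl
  refine ⟨t, spread_of_succ hN (fun r => hX.support_nonempty (t r)) fun r a ha b hb =>
    ⟨hX.lt_of_lt (by rw [ht]; omega) a ha b hb, ?_⟩⟩
  have hb : t (r + 1) ≤ b := hX.le_of_mem_support hb
  have ha : N a ≤ (X (t r)).support.sup N := le_sup ha
  rw [ht] at hb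
  omega

end IsBlock

lemma ple_of_forall_mem_span {X Y : ℕ → ℕ →₀ F} (h : ∀ m, X m ∈ Submodule.span F (Set.range Y)) :
    PLE X Y :=
  fun _ ⟨hv0, hv⟩ => ⟨hv0, Submodule.span_le.2 (Set.range_subset_iff.2 h) hv⟩

lemma exists_even_add_of_three (f : ℕ → ℕ) (n : ℕ) :
    ∃ p q, n ≤ p ∧ p < q ∧ q ≤ n + 2 ∧ Even (f p + f q) := by
  by_cases h₀₁ : Even (f n + f (n + 1))
  · exact ⟨n, n + 1, le_rfl, by omega, by omega, h₀₁⟩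
  by_cases h₁₂ : Even (f (n + 1) + f (n + 2))
  · exact ⟨n + 1, n + 2, by omega, by omega, le_rfl, h₁₂⟩
  refine ⟨n, n + 2, le_rfl, by omega, le_rfl, ?_⟩
  rw [Nat.even_add] at *
  tauto

lemma Spread.exists_even_sums (hN : Monotone N) {z : ℕ → ℕ →₀ F} (hz0 : ∀ r, z r ≠ 0)
    (hz : Spread N (suppSeq z)) :
    ∃ w : ℕ → ℕ →₀ F, (∀ k, w k ∈ Submodule.span F (Set.range z)) ∧ (∀ k, w k ≠ 0) ∧
      Spread N (suppSeq w) ∧ ∀ k, Even (nearCount N (w k).support) := by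
  choose p q hp hpq hq hev using
    fun k => exists_even_add_of_three (fun r => nearCount N (z r).support) (3 * k)
  have hsupp (k : ℕ) : (z (p k) + z (q k)).support = (z (p k)).support ∪ (z (q k)).support :=
    Finsupp.support_add_eq (hz.pairwise_disjoint (hpq k).ne)
  refine ⟨fun k => z (p k) + z (q k),
    fun k => add_mem (Submodule.subset_span ⟨_, rfl⟩) (Submodule.subset_span ⟨_, rfl⟩),
    fun k => ?_, fun k k' hkk' a ha b hb => ?_, fun k => ?_⟩
  · rw [← Finsupp.support_nonempty_iff, hsupp]
    exact (Finsupp.support_nonempty_iff.2 (hz0 _)).mono subset_union_left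
  · simp only [suppSeq, hsupp, mem_union] at ha hb
    obtain ⟨r, hr, ha⟩ : ∃ r ≤ 3 * k + 2, a ∈ (z r).support := by
      rcases ha with ha | ha
      exacts [⟨_, (hpq k).le.trans (hq k), ha⟩, ⟨_, hq k, ha⟩]
    obtain ⟨r', hr', hb⟩ : ∃ r', 3 * k' ≤ r' ∧ b ∈ (z r').support := by
      rcases hb with hb | hb
      exacts [⟨_, hp k', hb⟩, ⟨_, (hp k').trans (hpq k').le, hb⟩]
    exact hz (by omega) a ha b hb
  · have hsep : ∀ a ∈ (z (p k)).support, ∀ b ∈ (z (q k)).support, a < b ∧ N a < b :=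
      hz (hpq k)
    rw [hsupp, nearCount_union_of_forall_lt hN hsep]
    exact hev k

lemma fDense_inter_even (hN : Monotone N) {𝓕 : BlockFilter F} {S : Set (ℕ →₀ F)}
    (hS : S ∈ 𝓕.sets) : FDense 𝓕 (S ∩ {v | Even (nearCount N v.support)}) := by
  classical
  intro X _ hXF
  obtain ⟨Z, hZ, -, hZS⟩ := 𝓕.blockBase _ (𝓕.inter _ hS _ hXF)
  obtain ⟨t, ht⟩ := hZ.exists_spread_comp hN
  obtain ⟨w, hwZ, hw0, hw, hwev⟩ := ht.exists_even_sums hN fun r => hZ.1 (t r)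
  have hli := linearIndependent_of_pairwise_disjoint_support hw0 hw.pairwise_disjoint
  refine ⟨Submodule.span F (Set.range w),
    fun _ => Infinite.not_finite (linearIndependent_span hli).finite, ?_⟩
  rintro v ⟨hvw, hv0⟩
  have hvZ : v ∈ spanSet Z := ⟨hv0, Submodule.span_le.2 (Set.range_subset_iff.2 fun k =>
    Submodule.span_mono (Set.range_comp_subset_range t Z) (hwZ k)) hvw⟩
  obtain ⟨hvS, hvX⟩ := hZS hvZ
  refine ⟨hvX, hvS, ?_⟩
  obtain ⟨c, rfl⟩ := Finsupp.mem_span_range_iff_exists_finsupp.1 hvw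
  show Even (nearCount N _)
  rw [support_sum_smul_of_pairwise_disjoint hw.pairwise_disjoint]
  exact hw.even_nearCount_biUnion hN hwev c.support

lemma IsBlock.spread_of_even (hN : Monotone N) {W : ℕ → ℕ →₀ F} (hW : IsBlock W)
    (hev : ∀ v ∈ spanSet W, Even (nearCount N v.support)) : Spread N (suppSeq W) := by
  refine spread_of_succ hN hW.support_nonempty fun j a ha b hb => ⟨hW.2 j a ha b hb, ?_⟩
  have hsupp : (W j + W (j + 1)).support = (W j).support ∪ (W (j + 1)).support :=
    Finsupp.support_add_eq (hW.pairwise_disjoint (by omega : j ≠ j + 1))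
  have hsum : W j + W (j + 1) ∈ spanSet W := by
    refine ⟨?_, add_mem (hW.mem_spanSet j).2 (hW.mem_spanSet (j + 1)).2⟩
    rw [← Finsupp.support_nonempty_iff, hsupp]
    exact (hW.support_nonempty j).mono subset_union_left
  by_contra! hbN
  have h := hev _ hsum
  rw [hsupp, nearCount_union hN (hW.2 j), if_pos ⟨a, ha, b, hb, hbN⟩] at h
  exact Nat.even_add_one.1 h ((hev _ (hW.mem_spanSet j)).add (hev _ (hW.mem_spanSet (j + 1))))

lemma PFilter.exists_diagonal {𝓕 : BlockFilter F} (h𝓕 : PFilter 𝓕) {ι : Type*} [Countable ι]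
    [Nonempty ι] (Xs : ι → ℕ → ℕ →₀ F) (hXs : ∀ i, IsBlock (Xs i) ∧ spanSet (Xs i) ∈ 𝓕.sets) :
    ∃ Y, IsBlock Y ∧ spanSet Y ∈ 𝓕.sets ∧ ∀ i, PLEs Y (Xs i) := by
  obtain ⟨e, he⟩ := exists_surjective_nat ι
  obtain ⟨Y, hY, hYF, hYe⟩ := h𝓕 (Xs ∘ e) fun n => hXs (e n)
  exact ⟨Y, hY, hYF, fun i => by obtain ⟨n, rfl⟩ := he i; exact hYe n⟩

lemma finite_setOf_length_le_forall_mem {α : Type*} {S : Set α} (hS : S.Finite) (n : ℕ) :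
    {l : List α | l.length ≤ n ∧ ∀ a ∈ l, a ∈ S}.Finite := by
  have := hS.to_subtype
  refine ((List.finite_length_le S n).image (List.map Subtype.val)).subset ?_
  rintro l ⟨hlen, hl⟩
  lift l to List S using hl
  exact ⟨l, by simpa using hlen, rfl⟩

lemma exists_monotone_bound (f : List (Finset ℕ) → ℕ) :
    ∃ N : ℕ → ℕ, Monotone N ∧ ∀ m (l : List (Finset ℕ)),
      l.length ≤ m + 1 → (∀ a ∈ l, ∀ i ∈ a, i ≤ m) → f l ≤ N m := by
  have hfin (m : ℕ) : {a : Finset ℕ | ∀ i ∈ a, i ≤ m}.Finite :=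
    (range (m + 1)).powerset.finite_toSet.subset fun a ha =>
      mem_powerset.2 fun i hi => mem_range.2 (Nat.lt_succ_of_le (ha i hi))
  choose B hB using fun m =>
    ((finite_setOf_length_le_forall_mem (hfin m) (m + 1)).image f).bddAbove
  refine ⟨fun m => ∑ i ∈ range (m + 1), B i,
    fun m m' h => sum_le_sum_of_subset (range_subset_range.2 (by omega)), fun m l hlen hl => ?_⟩
  exact (hB m ⟨l, ⟨hlen, hl⟩, rfl⟩).trans
    (single_le_sum (fun i _ => Nat.zero_le (B i)) (self_mem_range_succ m))

lemma IsBlock.apply_ofFn_support_le {X : ℕ → ℕ →₀ F} (hX : IsBlock X)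
    {f : List (Finset ℕ) → ℕ} (hf : ∀ m (l : List (Finset ℕ)),
      l.length ≤ m + 1 → (∀ a ∈ l, ∀ i ∈ a, i ≤ m) → f l ≤ N m) (k : ℕ) :
    f (List.ofFn fun i : Fin (k + 1) => (X i).support) ≤
      N ((X k).support.max' (hX.support_nonempty k)) := by
  refine hf _ _ (by simpa using hX.le_of_mem_support (max'_mem _ _)) fun a ha i hi => ?_
  obtain ⟨j, rfl⟩ := List.mem_ofFn.1 ha
  exact hX.le_max'_of_le (Nat.lt_succ_iff.1 j.2) hi

end BlockPaper

open BlockPaper in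
theorem stmt1_general {F : Type} [Field F] (𝓕 : BlockFilter F) (h𝓕 : PPlus 𝓕)
    (Xs : List (Finset ℕ) → ℕ → (ℕ →₀ F))
    (hXs : ∀ l, IsBlockListF l → IsBlock (Xs l) ∧ spanSet (Xs l) ∈ 𝓕.sets) :
    ∃ X : ℕ → (ℕ →₀ F), IsBlock X ∧ spanSet X ∈ 𝓕.sets ∧
      ∀ k : ℕ, PLE (fun m => X (m + k)) (Xs (List.ofFn fun i : Fin k => (X i).support)) := by
  classical
  obtain ⟨hfull, hp⟩ := h𝓕
  have hnil : IsBlockListF ([] : List (Finset ℕ)) := ⟨by simp, List.isChain_nil⟩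
  have : Nonempty {l // IsBlockListF l} := ⟨⟨[], hnil⟩⟩
  obtain ⟨Y, hY, hYF, hYXs⟩ :=
    hp.exists_diagonal (fun l : {l // IsBlockListF l} => Xs l) fun l => hXs l l.2
  choose n hn using hYXs
  obtain ⟨N, hN, hnN⟩ := exists_monotone_bound fun l => if h : IsBlockListF l then n ⟨l, h⟩ else 0
  obtain ⟨W, hW, hWF, hWS⟩ := 𝓕.blockBase _ <| hfull _ <|
    fDense_inter_even hN (𝓕.inter _ hYF _ (hXs [] hnil).2)
  have hWD (m : ℕ) := (hWS (hW.mem_spanSet m)).1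
  have hspread := hW.spread_of_even hN fun v hv => (hWS hv).1.2
  refine ⟨W, hW, hWF, fun k => ple_of_forall_mem_span fun m => ?_⟩
  rcases k with _ | k
  · simpa using (hWD m).1.2.2
  have hl := hW.isBlockListF_ofFn (k + 1)
  have hnl := hW.apply_ofFn_support_le hnN k
  rw [dif_pos hl] at hnl
  refine (hn ⟨_, hl⟩ (hY.mem_tailSpanSet (hWD _).1.1 fun i hi => ?_)).2
  exact hnl.trans_lt (hspread (by omega) _ (Finset.max'_mem _ _) i hi).2

open BlockPaper in
/-- If `𝓕` is a `(p⁺)`-filter on `E` and `⟨X_a⃗⟩ ∈ 𝓕` for every `a⃗ ∈ FIN^[<∞]`, then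
there is `⟨X⟩ ∈ 𝓕` with `X/a⃗ ⪯ X_a⃗` for every finite initial segment `a⃗` of `supp(X)`. -/
theorem stmt1 {F : Type} [Field F] [Countable F] (𝓕 : BlockFilter F) (h𝓕 : PPlus 𝓕)
    (Xs : List (Finset ℕ) → ℕ → (ℕ →₀ F))
    (hXs : ∀ l, IsBlockListF l → IsBlock (Xs l) ∧ spanSet (Xs l) ∈ 𝓕.sets) :
    ∃ X : ℕ → (ℕ →₀ F), IsBlock X ∧ spanSet X ∈ 𝓕.sets ∧
      ∀ k : ℕ, PLE (fun m => X (m + k)) (Xs (List.ofFn fun i : Fin k => (X i).support)) :=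
  stmt1_general 𝓕 h𝓕 Xs hXs
end

section
/- Let F be a block filter on E. Then F is a strong (p)-filter if and only if for every ⟨X⟩ ∈ F and every strategy σ for player I in the restricted Gowers game G_F[X], there is an outcome Y of σ with ⟨Y⟩ ∈ F. -/
/-!
Both directions identify a diagonalization of a family `(X_x⃗)` with a play of the restricted
Gowers game. Given I's strategy `σ`, diagonalize the family `x⃗ ↦ σ(x⃗)`: the diagonal `Y`
satisfies `y_k ∈ ⟨Y/(y_0, …, y_{k-1})⟩ ⊆ ⟨σ(y_0, …, y_{k-1})⟩`, so `Y` is itself a play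
against `σ`. Conversely, given a family `(X_x⃗)`, let I answer a position `x⃗` by a block
sequence of `𝓕` lying below `X_u⃗` for all (finitely many) initial segments `u⃗` of `x⃗`;
an outcome of this strategy in `𝓕` is a diagonalization.
-/

namespace BlockPaper

variable {F : Type} [Field F]

lemma take_ofFn_apply {α : Type*} (g : ℕ → α) {k n : ℕ} (h : k ≤ n) :
    (List.ofFn fun i : Fin n => g i).take k = List.ofFn fun i : Fin k => g i :=
  List.ext_getElem (by simp [h]) (by simp)

lemma isBlockList_nil : IsBlockList ([] : List (ℕ →₀ F)) :=
  ⟨by simp, List.isChain_nil⟩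

lemma IsBlock.isBlockList_ofFn {X : ℕ → (ℕ →₀ F)} (hX : IsBlock X) (k : ℕ) :
    IsBlockList (List.ofFn fun i : Fin k => X i) := by
  refine ⟨?_, List.isChain_iff_getElem.mpr fun i _ => by simpa using hX.2 i⟩
  rintro v hv
  obtain ⟨i, rfl⟩ := List.mem_ofFn.mp hv
  exact hX.1 i

lemma ple_of_forall_mem {X Y : ℕ → (ℕ →₀ F)} (h : ∀ n, X n ∈ spanSet Y) : PLE X Y :=
  fun _ hv => ⟨hv.1, Submodule.span_le.mpr (by rintro _ ⟨n, rfl⟩; exact (h n).2) hv.2⟩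

lemma legalPos_ofFn {σ : List (ℕ →₀ F) → ℕ → (ℕ →₀ F)} {ys : ℕ → (ℕ →₀ F)}
    (hys : IsBlock ys) {k : ℕ}
    (h : ∀ j < k, ys j ∈ spanSet (σ (List.ofFn fun i : Fin j => ys i))) :
    LegalPos σ (List.ofFn fun i : Fin k => ys i) := by
  refine ⟨hys.isBlockList_ofFn k, fun j hj => ?_⟩
  have hjk : j < k := by simpa using hj
  rw [List.get_ofFn, take_ofFn_apply ys hjk.le]
  exact h j hjk

namespace BlockFilter

lemma biInter_mem {ι : Type*} (𝓕 : BlockFilter F) {s : Finset ι} (hs : s.Nonempty)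
    {f : ι → Set (ℕ →₀ F)} (hf : ∀ i ∈ s, f i ∈ 𝓕.sets) : (⋂ i ∈ s, f i) ∈ 𝓕.sets := by
  induction hs using Finset.Nonempty.cons_induction with
  | singleton a => simpa using hf a
  | cons a s ha _ ih =>
    rw [← Finset.set_biInter_coe, Finset.coe_cons, Set.biInter_insert, Finset.set_biInter_coe]
    exact 𝓕.inter _ (hf a (by simp)) _ (ih fun i hi => hf i (by simp [hi]))

lemma exists_below_initial_segments (𝓕 : BlockFilter F)
    {Xs : List (ℕ →₀ F) → ℕ → (ℕ →₀ F)}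
    (hXs : ∀ l, IsBlockList l → IsBlock (Xs l) ∧ spanSet (Xs l) ∈ 𝓕.sets)
    (l : List (ℕ →₀ F)) :
    ∃ Y, IsBlock Y ∧ spanSet Y ∈ 𝓕.sets ∧
      ∀ k ≤ l.length, IsBlockList (l.take k) → PLE Y (Xs (l.take k)) := by
  classical
  set s := (Finset.range (l.length + 1)).filter fun k => IsBlockList (l.take k)
  have hs : s.Nonempty := ⟨0, by simpa [s] using isBlockList_nil⟩
  have hmem : (⋂ k ∈ s, spanSet (Xs (l.take k))) ∈ 𝓕.sets :=
    𝓕.biInter_mem hs fun k hk => (hXs _ (Finset.mem_filter.mp hk).2).2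
  obtain ⟨Y, hY, hYF, hYsub⟩ := 𝓕.blockBase _ hmem
  refine ⟨Y, hY, hYF, fun k hk hbl => hYsub.trans ?_⟩
  exact Set.biInter_subset_of_mem (Finset.mem_filter.mpr ⟨by simp; omega, hbl⟩)

end BlockFilter

lemma StrongP.exists_play_mem {𝓕 : BlockFilter F} (hSP : StrongP 𝓕)
    {X : ℕ → (ℕ →₀ F)} (hX : IsBlock X) (hXF : spanSet X ∈ 𝓕.sets)
    {σ : List (ℕ →₀ F) → ℕ → (ℕ →₀ F)} (hσ : IsStratIGF 𝓕 X σ) :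
    ∃ ys, PlayAgainstI σ ys ∧ spanSet ys ∈ 𝓕.sets := by
  classical
  obtain ⟨ys, hys, hysF, hdiag⟩ := hSP (fun l => if LegalPos σ l then σ l else X) fun l _ => by
    split_ifs with h
    exacts [⟨(hσ l h).1, (hσ l h).2.2⟩, ⟨hX, hXF⟩]
  refine ⟨ys, ⟨hys, fun k => ?_⟩, hysF⟩
  induction k using Nat.strong_induction_on with
  | _ k ih =>
    have hk := hdiag k ⟨hys.1 k, Submodule.subset_span ⟨0, by simp⟩⟩
    rwa [if_pos (legalPos_ofFn hys ih)] at hk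

lemma StrongP.of_forall_exists_play_mem {𝓕 : BlockFilter F}
    (hgame : ∀ X : ℕ → (ℕ →₀ F), IsBlock X → spanSet X ∈ 𝓕.sets →
      ∀ σ : List (ℕ →₀ F) → ℕ → (ℕ →₀ F), IsStratIGF 𝓕 X σ →
        ∃ ys : ℕ → (ℕ →₀ F), PlayAgainstI σ ys ∧ spanSet ys ∈ 𝓕.sets) :
    StrongP 𝓕 := by
  intro Xs hXs
  choose σ hσ hσF hσle using 𝓕.exists_below_initial_segments hXs
  obtain ⟨hX, hXF⟩ := hXs [] isBlockList_nil
  obtain ⟨ys, ⟨hys, hplay⟩, hysF⟩ :=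
    hgame (Xs []) hX hXF σ fun l _ =>
      ⟨hσ l, by simpa using hσle l 0 (by simp) isBlockList_nil, hσF l⟩
  refine ⟨ys, hys, hysF, fun k => ple_of_forall_mem fun m => ?_⟩
  have hle := hσle (List.ofFn fun i : Fin (m + k) => ys i) k (by simp)
  rw [take_ofFn_apply ys (Nat.le_add_left k m)] at hle
  exact hle (hys.isBlockList_ofFn k) (hplay (m + k))

end BlockPaper

open BlockPaper in
theorem stmt3_general {F : Type} [Field F] (𝓕 : BlockFilter F) :
    StrongP 𝓕 ↔
      ∀ X : ℕ → (ℕ →₀ F), IsBlock X → spanSet X ∈ 𝓕.sets →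
        ∀ σ : List (ℕ →₀ F) → ℕ → (ℕ →₀ F), IsStratIGF 𝓕 X σ →
          ∃ ys : ℕ → (ℕ →₀ F), PlayAgainstI σ ys ∧ spanSet ys ∈ 𝓕.sets :=
  ⟨fun hSP _ hX hXF _ hσ => hSP.exists_play_mem hX hXF hσ, StrongP.of_forall_exists_play_mem⟩

open BlockPaper in
/-- A block filter `𝓕` on `E` is a strong `(p)`-filter iff for every `⟨X⟩ ∈ 𝓕` and every
strategy `σ` for player I in the restricted Gowers game `G_𝓕[X]`, some outcome of `σ`
spans a set in `𝓕`. -/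
theorem stmt3 {F : Type} [Field F] [Countable F] (𝓕 : BlockFilter F) :
    StrongP 𝓕 ↔
      ∀ X : ℕ → (ℕ →₀ F), IsBlock X → spanSet X ∈ 𝓕.sets →
        ∀ σ : List (ℕ →₀ F) → ℕ → (ℕ →₀ F), IsStratIGF 𝓕 X σ →
          ∃ ys : ℕ → (ℕ →₀ F), PlayAgainstI σ ys ∧ spanSet ys ∈ 𝓕.sets :=
  stmt3_general 𝓕
end

section
/- Let F be a block filter on E. Suppose that for every clopen set 𝔸 ⊆ E^[∞] there is ⟨X⟩ ∈ F such that either player I has a strategy in the asymptotic game F[X] for playing out of 𝔸, or player II has a strategy in the Gowers game G[X] for playing into 𝔸. Then F is a (p)-filter. -/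
open BlockPaper

/-- `E` carries the discrete topology (so `E^ℕ` gets the product topology, and
`E^[∞]` the subspace topology). -/
instance {F : Type} [Field F] : TopologicalSpace (ℕ →₀ F) := ⊥


section StmtAux

variable {F : Type} [Field F]

lemma mem_spanSet_self {X : ℕ → (ℕ →₀ F)} (hX : ∀ n, X n ≠ 0) (k : ℕ) :
    X k ∈ spanSet X :=
  ⟨hX k, Submodule.subset_span ⟨k, rfl⟩⟩

lemma isBlock_le_supp {X : ℕ → (ℕ →₀ F)} (hX : IsBlock X) :
    ∀ k, ∀ i ∈ (X k).support, k ≤ i := by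
  intro k
  induction k with
  | zero => intro i _; exact Nat.zero_le i
  | succ k ih =>
    intro i hi
    obtain ⟨j, hj⟩ := Finsupp.support_nonempty_iff.mpr (hX.1 k)
    exact Nat.succ_le_of_lt (lt_of_le_of_lt (ih j hj) (hX.2 k j hj i hi))

lemma tailSpanSet_subset (X : ℕ → (ℕ →₀ F)) (n : ℕ) :
    tailSpanSet X n ⊆ spanSet X := by
  intro v hv
  exact ⟨hv.1, Submodule.span_mono (fun x hx => hx.1) hv.2⟩

lemma tailSpanSet_supp {X : ℕ → (ℕ →₀ F)} {n : ℕ} {v : ℕ →₀ F}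
    (hv : v ∈ tailSpanSet X n) : ∀ i ∈ v.support, n < i := by
  have hle : Submodule.span F {x : ℕ →₀ F | (∃ k, X k = x) ∧ ∀ i ∈ x.support, n < i}
      ≤ Finsupp.supported F F {i : ℕ | n < i} := by
    refine Submodule.span_le.mpr ?_
    intro x hx
    exact (Finsupp.mem_supported F x).mpr (fun i hi => hx.2 i hi)
  intro i hi
  exact (Finsupp.mem_supported F v).mp (hle hv.2) hi

/-- max of the supports of the entries of a list of vectors. -/
def msup (l : List (ℕ →₀ F)) : ℕ := l.foldr (fun v m => max (v.support.sup id) m) 0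

lemma le_msup {l : List (ℕ →₀ F)} {v : ℕ →₀ F} (hv : v ∈ l) :
    v.support.sup id ≤ msup l := by
  induction l with
  | nil => simp at hv
  | cons a t ih =>
    rcases List.mem_cons.mp hv with h | h
    · subst h; exact le_max_left _ _
    · exact le_trans (ih h) (le_max_right _ _)

/-- bound used for the deterministic play against a strategy of I. -/
def bnd (σ : List (ℕ →₀ F) → ℕ) (l : List (ℕ →₀ F)) : ℕ := max (σ l) (msup l)

def playStep (X : ℕ → (ℕ →₀ F)) (σ : List (ℕ →₀ F) → ℕ) (y0 y1 : ℕ →₀ F)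
    (l : List (ℕ →₀ F)) : ℕ →₀ F :=
  if l.length = 0 then y0 else if l.length = 1 then y1 else X (bnd σ l + 1)

def playList (X : ℕ → (ℕ →₀ F)) (σ : List (ℕ →₀ F) → ℕ) (y0 y1 : ℕ →₀ F) :
    ℕ → List (ℕ →₀ F)
  | 0 => []
  | k + 1 => playList X σ y0 y1 k ++ [playStep X σ y0 y1 (playList X σ y0 y1 k)]

/-- II's deterministic play against I's strategy `σ` in `F[X]`, starting `y0, y1`. -/
def play (X : ℕ → (ℕ →₀ F)) (σ : List (ℕ →₀ F) → ℕ) (y0 y1 : ℕ →₀ F) (k : ℕ) :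
    ℕ →₀ F := playStep X σ y0 y1 (playList X σ y0 y1 k)

lemma playList_length (X : ℕ → (ℕ →₀ F)) (σ : List (ℕ →₀ F) → ℕ) (y0 y1 : ℕ →₀ F) :
    ∀ k, (playList X σ y0 y1 k).length = k := by
  intro k
  induction k with
  | zero => rfl
  | succ k ih => simp [playList, ih]

lemma playList_ofFn (X : ℕ → (ℕ →₀ F)) (σ : List (ℕ →₀ F) → ℕ) (y0 y1 : ℕ →₀ F) :
    ∀ k, playList X σ y0 y1 k = List.ofFn (fun i : Fin k => play X σ y0 y1 i) := by
  intro k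
  induction k with
  | zero => rfl
  | succ k ih =>
    rw [List.ofFn_succ']
    show playList X σ y0 y1 k ++ [play X σ y0 y1 k] = _
    rw [ih, List.concat_eq_append]
    simp

lemma play_zero (X : ℕ → (ℕ →₀ F)) (σ : List (ℕ →₀ F) → ℕ) (y0 y1 : ℕ →₀ F) :
    play X σ y0 y1 0 = y0 := rfl

lemma play_one (X : ℕ → (ℕ →₀ F)) (σ : List (ℕ →₀ F) → ℕ) (y0 y1 : ℕ →₀ F) :
    play X σ y0 y1 1 = y1 := by
  show playStep X σ y0 y1 (playList X σ y0 y1 1) = y1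
  rw [playStep, if_neg, if_pos]
  · rw [playList_length]
  · rw [playList_length]; omega

lemma play_add_two (X : ℕ → (ℕ →₀ F)) (σ : List (ℕ →₀ F) → ℕ) (y0 y1 : ℕ →₀ F)
    (k : ℕ) :
    play X σ y0 y1 (k + 2) = X (bnd σ (playList X σ y0 y1 (k + 2)) + 1) := by
  show playStep X σ y0 y1 (playList X σ y0 y1 (k + 2)) = _
  rw [playStep, if_neg, if_neg]
  · rw [playList_length]; omega
  · rw [playList_length]; omega

lemma play_mem_playList_succ (X : ℕ → (ℕ →₀ F)) (σ : List (ℕ →₀ F) → ℕ)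
    (y0 y1 : ℕ →₀ F) (k : ℕ) :
    play X σ y0 y1 k ∈ playList X σ y0 y1 (k + 1) := by
  show play X σ y0 y1 k ∈ playList X σ y0 y1 k ++ [playStep X σ y0 y1 (playList X σ y0 y1 k)]
  exact List.mem_append.mpr (Or.inr (List.mem_singleton.mpr rfl))

lemma play_isPlay {X : ℕ → (ℕ →₀ F)} {σ : List (ℕ →₀ F) → ℕ} {y0 y1 : ℕ →₀ F}
    (hX : IsBlock X) (hy0 : y0 ∈ spanSet X) (hy1 : y1 ∈ spanSet X)
    (h01 : ∀ i ∈ y0.support, ∀ j ∈ y1.support, i < j)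
    (hσ0 : ∀ i ∈ y0.support, σ [] < i)
    (hσ1 : ∀ i ∈ y1.support, σ [y0] < i) :
    PlayAgainstIAsymp X σ (play X σ y0 y1) := by
  have memSpan : ∀ k, play X σ y0 y1 k ∈ spanSet X := by
    intro k
    match k with
    | 0 => exact hy0
    | 1 => rw [play_one]; exact hy1
    | k + 2 => rw [play_add_two]; exact mem_spanSet_self hX.1 _
  have key : ∀ k, ∀ j ∈ (play X σ y0 y1 (k + 1)).support,
      bnd σ (playList X σ y0 y1 (k + 1)) < j := by
    intro k
    match k with
    | 0 =>
      intro j hj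
      rw [play_one] at hj
      have hL1 : playList X σ y0 y1 1 = [y0] := by
        show [] ++ [playStep X σ y0 y1 []] = [y0]; rfl
      rw [hL1]
      obtain ⟨i0, hi0⟩ := Finsupp.support_nonempty_iff.mpr hy0.1
      have hjpos : 0 < j := lt_of_le_of_lt (Nat.zero_le i0) (h01 i0 hi0 j hj)
      refine max_lt (hσ1 j hj) ?_
      show max (y0.support.sup id) (msup ([] : List (ℕ →₀ F))) < j
      refine max_lt ?_ hjpos
      exact (Finset.sup_lt_iff hjpos).mpr (fun i hi => h01 i hi j hj)
    | k + 1 =>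
      intro j hj
      rw [play_add_two] at hj
      have := isBlock_le_supp hX _ j hj
      show bnd σ (playList X σ y0 y1 (k + 2)) < j
      omega
  have suppLe : ∀ k, ∀ i ∈ (play X σ y0 y1 k).support,
      i ≤ bnd σ (playList X σ y0 y1 (k + 1)) := by
    intro k i hi
    have h1 : i ≤ (play X σ y0 y1 k).support.sup id := Finset.le_sup (f := id) hi
    have h2 := le_msup (play_mem_playList_succ X σ y0 y1 k)
    exact le_trans h1 (le_trans h2 (le_max_right _ _))
  refine ⟨⟨fun k => (memSpan k).1, fun k i hi j hj =>
    lt_of_le_of_lt (suppLe k i hi) (key k j hj)⟩, ?_⟩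
  intro k
  refine ⟨memSpan k, ?_⟩
  rw [← playList_ofFn]
  match k with
  | 0 => exact hσ0
  | k + 1 =>
    intro i hi
    exact lt_of_le_of_lt (le_max_left _ (msup (playList X σ y0 y1 (k + 1)))) (key k i hi)

end StmtAux

/-- If a block filter `𝓕` satisfies the local Rosendal dichotomy for all clopen
`𝔸 ⊆ E^[∞]`, then `𝓕` is a `(p)`-filter. -/
theorem stmt4 {F : Type} [Field F] [Countable F] (𝓕 : BlockFilter F)
    (h : ∀ A : Set (ℕ → (ℕ →₀ F)), A ⊆ {X | IsBlock X} →
      IsClopen (Subtype.val ⁻¹' A : Set {X : ℕ → (ℕ →₀ F) // IsBlock X}) →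
      ∃ X : ℕ → (ℕ →₀ F), IsBlock X ∧ spanSet X ∈ 𝓕.sets ∧
        ((∃ σ : List (ℕ →₀ F) → ℕ, ∀ ys, PlayAgainstIAsymp X σ ys → ys ∉ A) ∨
         (∃ α : List (ℕ → (ℕ →₀ F)) → (ℕ →₀ F), IsStratII (LegalG X) α ∧
            ∀ Ys : ℕ → ℕ → (ℕ →₀ F), (∀ k, LegalG X (Ys k)) → outcomeOf α Ys ∈ A))) :
    PFilter 𝓕 := by
  intro Xs hXs
  haveI : DiscreteTopology (ℕ →₀ F) := ⟨rfl⟩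
  -- decreasing chain of spans in the filter
  set T : ℕ → Set (ℕ →₀ F) :=
    fun n => Nat.rec (spanSet (Xs 0)) (fun k acc => acc ∩ spanSet (Xs (k + 1))) n with hT
  have hTmem : ∀ n, T n ∈ 𝓕.sets := by
    intro n
    induction n with
    | zero => exact (hXs 0).2
    | succ n ih => exact 𝓕.inter _ ih _ (hXs (n + 1)).2
  have hTsub : ∀ n m, m ≤ n → T n ⊆ spanSet (Xs m) := by
    intro n
    induction n with
    | zero => intro m hm; interval_cases m; exact subset_rfl
    | succ n ih =>
      intro m hm
      rcases Nat.lt_or_ge m (n + 1) with h' | h'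
      · exact subset_trans Set.inter_subset_left (ih m (Nat.lt_succ_iff.mp h'))
      · have : m = n + 1 := le_antisymm hm h'
        subst this
        exact Set.inter_subset_right
  choose Yc hYcB hYcM hYcS using fun n => 𝓕.blockBase (T n) (hTmem n)
  set A : Set (ℕ → (ℕ →₀ F)) :=
    {ys | IsBlock ys ∧ ys 1 ∉ spanSet (Yc ((ys 0).support.sup id))} with hA
  have hsub : A ⊆ {X | IsBlock X} := fun _ hx => hx.1
  have hclopen : IsClopen (Subtype.val ⁻¹' A : Set {X : ℕ → (ℕ →₀ F) // IsBlock X}) := by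
    have heq : (Subtype.val ⁻¹' A : Set {X : ℕ → (ℕ →₀ F) // IsBlock X}) =
        (fun p : {X : ℕ → (ℕ →₀ F) // IsBlock X} => ((p : ℕ → (ℕ →₀ F)) 0, (p : ℕ → (ℕ →₀ F)) 1))
          ⁻¹' {q : (ℕ →₀ F) × (ℕ →₀ F) | q.2 ∉ spanSet (Yc (q.1.support.sup id))} := by
      ext p
      simp only [Set.mem_preimage, hA, Set.mem_setOf_eq]
      exact and_iff_right p.2
    rw [heq]
    refine (isClopen_discrete _).preimage ?_
    exact Continuous.prodMk ((continuous_apply 0).comp continuous_subtype_val)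
      ((continuous_apply 1).comp continuous_subtype_val)
  obtain ⟨X, hXb, hXm, hcase⟩ := h A hsub hclopen
  refine ⟨X, hXb, hXm, ?_⟩
  intro n
  rcases hcase with ⟨σ, hσ⟩ | ⟨α, hα, hαA⟩
  · -- I plays out of A in the asymptotic game
    set k0 := max (σ [] + 1) n with hk0
    set y0 := X k0 with hy0def
    have hy0 : y0 ∈ spanSet X := mem_spanSet_self hXb.1 k0
    have hy0supp : ∀ i ∈ y0.support, k0 ≤ i := isBlock_le_supp hXb k0
    set n' := y0.support.sup id with hn'
    have hnn' : n ≤ n' := by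
      obtain ⟨i0, hi0⟩ := Finsupp.support_nonempty_iff.mpr hy0.1
      have h1 : n ≤ k0 := le_max_right _ _
      have h2 : k0 ≤ i0 := hy0supp i0 hi0
      have h3 : i0 ≤ n' := Finset.le_sup (f := id) hi0
      omega
    refine ⟨max n' (σ [y0]), ?_⟩
    intro v hv
    have hvs : ∀ i ∈ v.support, max n' (σ [y0]) < i := tailSpanSet_supp hv
    have hvX : v ∈ spanSet X := tailSpanSet_subset X _ hv
    have hp : PlayAgainstIAsymp X σ (play X σ y0 v) := by
      refine play_isPlay hXb hy0 hvX ?_ ?_ ?_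
      · intro i hi j hj
        have h1 : i ≤ n' := Finset.le_sup (f := id) hi
        have h2 := hvs j hj
        omega
      · intro i hi
        have := hy0supp i hi
        have : σ [] + 1 ≤ k0 := le_max_left _ _
        omega
      · intro i hi
        have := hvs i hi
        omega
    have hnotA := hσ (play X σ y0 v) hp
    have hmem : v ∈ spanSet (Yc n') := by
      by_contra hvY
      apply hnotA
      refine ⟨hp.1, ?_⟩
      rw [play_one, play_zero]
      exact hvY
    exact hTsub n' n hnn' (hYcS n' hmem)
  · -- II plays into A in the Gowers game: contradiction
    exfalso
    set n'' := (α [X]).support.sup id with hn''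
    have hS : spanSet X ∩ spanSet (Yc n'') ∈ 𝓕.sets := 𝓕.inter _ hXm _ (hYcM n'')
    obtain ⟨Z, hZb, hZm, hZs⟩ := 𝓕.blockBase _ hS
    set Ys : ℕ → ℕ → (ℕ →₀ F) := fun k => if k = 0 then X else Z with hYs
    have hleg : ∀ k, LegalG X (Ys k) := by
      intro k
      cases k with
      | zero => exact ⟨hXb, subset_rfl⟩
      | succ k =>
        refine ⟨by simpa [hYs] using hZb, ?_⟩
        show spanSet (Ys (k + 1)) ⊆ spanSet X
        simp only [hYs, Nat.succ_ne_zero, if_neg (Nat.succ_ne_zero k)]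
        exact subset_trans hZs Set.inter_subset_left
    have hmemA := hαA Ys hleg
    have hspec := hα Ys hleg
    have h0 : outcomeOf α Ys 0 = α [X] := by
      show α (List.ofFn fun i : Fin 1 => Ys i) = α [X]
      congr 1
    have h1 : outcomeOf α Ys 1 ∈ spanSet (Yc n'') := by
      have hm := (hspec.2 1)
      have hZ1 : spanSet (Ys 1) = spanSet Z := by
        simp [hYs]
      rw [hZ1] at hm
      exact (hZs hm).2
    apply hmemA.2
    rw [h0]
    exact h1
end

section
/- If U is a stable ordered-union ultrafilter on FIN, then U is strategic: for every A ∈ FIN^[∞] with ⟨A⟩ ∈ U and every strategy α for player II in the Gowers game G[A], there is an outcome B of α with ⟨B⟩ ∈ U. -/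
open BlockPaper

/-- `α` is a strategy for player II in a Gowers-type game on `FIN` whose legal moves
for player I are given by `legal`. -/
def IsStratIIF (legal : (ℕ → Finset ℕ) → Prop)
    (α : List (ℕ → Finset ℕ) → Finset ℕ) : Prop :=
  ∀ Bs : ℕ → ℕ → Finset ℕ, (∀ k, legal (Bs k)) →
    IsBlockF (outcomeOf α Bs) ∧ ∀ k, outcomeOf α Bs k ∈ finUnions (Bs k)

/-!
At a legal position `p`, the set of II's answers `α (p ++ [Y])` to moves `Y` with `⟨Y⟩ ∈ U` is
`U`-large: otherwise its complement contains some `⟨Y⟩ ∈ U`, yet the answer to `Y` lies in `⟨Y⟩`.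
Fixing a move realizing each answer turns every finite sequence `s` of answers into a position, with
a `U`-large set `T s` of possible next answers. Stability gives `⟨B⟩ ∈ U` and bounds `ν s` with
`⟨B/ν s⟩ ⊆ T s`, so it suffices to find `⟨D⟩ ∈ U`, `D ⪯ B`, whose consecutive entries are
separated by a function `g` dominating `ν` on all sequences below a given bound.

Separation comes from a parity colouring. Cut `ℕ` into intervals, each longer than the values of
`g` on all earlier points, and count the places where a set jumps over a whole interval. `U`
concentrates on sets with an odd count (two far-apart entries of a block sequence add one jump),
and in a block sequence all of whose unions have an odd count, the union of two consecutive
entries can only stay odd if they jump over an interval.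
-/

open Finset

namespace BlockPaper

namespace IsBlockF

variable {Y : ℕ → Finset ℕ}

theorem le_of_mem (hY : IsBlockF Y) : ∀ {k x : ℕ}, x ∈ Y k → k ≤ x
  | 0, _, _ => Nat.zero_le _
  | k + 1, _, hx => by
    obtain ⟨y, hy⟩ := hY.1 k
    exact (hY.le_of_mem hy).trans_lt (hY.2 k y hy _ hx)

theorem lt_of_lt (hY : IsBlockF Y) {k l : ℕ} (hkl : k < l) {x y : ℕ} (hx : x ∈ Y k)
    (hy : y ∈ Y l) : x < y := by
  induction l generalizing y with
  | zero => omega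
  | succ l ih =>
    rcases Nat.lt_succ_iff_lt_or_eq.mp hkl with h | rfl
    · obtain ⟨z, hz⟩ := hY.1 l
      exact (ih h hz).trans (hY.2 l z hz y hy)
    · exact hY.2 k x hx y hy

theorem nonempty_of_mem_finUnions (hY : IsBlockF Y) {b : Finset ℕ} (hb : b ∈ finUnions Y) :
    b.Nonempty := by
  obtain ⟨G, ⟨k, hk⟩, rfl⟩ := hb
  exact (hY.1 k).mono (le_sup hk)

end IsBlockF

theorem mem_finUnions_self (Y : ℕ → Finset ℕ) (k : ℕ) : Y k ∈ finUnions Y :=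
  ⟨{k}, singleton_nonempty k, sup_singleton.symm⟩

theorem union_mem_finUnions {Y : ℕ → Finset ℕ} {u v : Finset ℕ} (hu : u ∈ finUnions Y)
    (hv : v ∈ finUnions Y) : u ∪ v ∈ finUnions Y := by
  obtain ⟨G, hG, rfl⟩ := hu
  obtain ⟨H, -, rfl⟩ := hv
  exact ⟨G ∪ H, hG.mono subset_union_left, (sup_union).symm⟩

theorem mem_finUnionsAbove {Y : ℕ → Finset ℕ} {b : Finset ℕ} {n : ℕ} (hb : b ∈ finUnions Y)
    (h : ∀ x ∈ b, n < x) : b ∈ finUnionsAbove Y n := by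
  obtain ⟨G, hG, rfl⟩ := hb
  exact ⟨G, hG, fun k hk i hi => h i (le_sup (f := Y) hk hi), rfl⟩

theorem liftFIN_setOf_not_mem {U : Ultrafilter FIN} {S : Set (Finset ℕ)} (h : liftFIN S ∉ U) :
    liftFIN {b | b ∉ S} ∈ U :=
  Ultrafilter.compl_mem_iff_notMem.mpr h

namespace OrderedUnion

variable {U : Ultrafilter FIN}

theorem exists_block_subset (hU : OrderedUnion U) {S : Set (Finset ℕ)} (hS : liftFIN S ∈ U) :
    ∃ Y, IsBlockF Y ∧ liftFIN (finUnions Y) ∈ U ∧ finUnions Y ⊆ S := by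
  obtain ⟨Y, hY, hYU, hYS⟩ := hU _ hS
  exact ⟨Y, hY, hYU, fun b hb => hYS (a := ⟨b, hY.nonempty_of_mem_finUnions hb⟩) hb⟩

theorem above_mem (hU : OrderedUnion U) (N : ℕ) : liftFIN {b | ∀ x ∈ b, N < x} ∈ U := by
  by_contra h
  obtain ⟨Y, hY, -, hYS⟩ := hU.exists_block_subset (liftFIN_setOf_not_mem h)
  exact hYS (mem_finUnions_self Y (N + 1)) fun x hx => hY.le_of_mem hx

end OrderedUnion

def separatingSeq (f : ℕ → ℕ) : ℕ → ℕ
  | 0 => 0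
  | i + 1 => separatingSeq f i + (range (separatingSeq f i + 1)).sup f + 1

theorem strictMono_separatingSeq (f : ℕ → ℕ) : StrictMono (separatingSeq f) :=
  strictMono_nat_of_lt_succ fun i => by simp only [separatingSeq]; omega

-- The bound `i < y` is automatic; it only makes the predicate decidable.
def BigJump (f : ℕ → ℕ) (x y : ℕ) : Prop :=
  ∃ i < y, x < separatingSeq f i ∧ separatingSeq f (i + 1) ≤ y

instance (f : ℕ → ℕ) (x y : ℕ) : Decidable (BigJump f x y) :=
  inferInstanceAs (Decidable (∃ i < y, _))

theorem BigJump.apply_lt {f : ℕ → ℕ} {x y z : ℕ} (h : BigJump f x y) (hz : z ≤ x) : f z < y := by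
  obtain ⟨i, -, hx, hy⟩ := h
  have : f z ≤ (range (separatingSeq f i + 1)).sup f := le_sup (mem_range.mpr (by omega))
  simp only [separatingSeq] at hy
  omega

theorem bigJump_of_separatingSeq_le {f : ℕ → ℕ} {x y : ℕ} (hy : separatingSeq f (x + 2) ≤ y) :
    BigJump f x y :=
  have := (strictMono_separatingSeq f).le_apply (x := x + 2)
  ⟨x + 1, by omega, (Nat.lt_succ_self x).trans_le (strictMono_separatingSeq f).le_apply, hy⟩

def jumpCount (f : ℕ → ℕ) : List ℕ → ℕ
  | x :: y :: l => (if BigJump f x y then 1 else 0) + jumpCount f (y :: l)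
  | _ => 0

theorem jumpCount_append (f : ℕ → ℕ) :
    ∀ (l₁ l₂ : List ℕ) (h₁ : l₁ ≠ []) (h₂ : l₂ ≠ []), jumpCount f (l₁ ++ l₂) =
      jumpCount f l₁ + jumpCount f l₂ + if BigJump f (l₁.getLast h₁) (l₂.head h₂) then 1 else 0
  | [x], y :: l₂, _, _ => by
    show jumpCount f (x :: y :: l₂) = 0 + _ + if BigJump f x y then 1 else 0
    simp only [jumpCount]
    omega
  | x :: x' :: l₁, l₂, _, h₂ => by
    simp only [List.cons_append, jumpCount]
    rw [← List.cons_append, jumpCount_append f (x' :: l₁) l₂ (by simp) h₂, List.getLast_cons_cons]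
    omega

def jumps (f : ℕ → ℕ) (b : Finset ℕ) : ℕ := jumpCount f b.sort

theorem sort_union_of_lt {u v : Finset ℕ} (h : ∀ x ∈ u, ∀ y ∈ v, x < y) :
    (u ∪ v).sort = u.sort ++ v.sort := by
  have hpair : (u.sort ++ v.sort).Pairwise (· < ·) :=
    List.pairwise_append.mpr ⟨(sortedLT_sort u).pairwise, (sortedLT_sort v).pairwise,
      fun x hx y hy => h x (mem_sort _ |>.mp hx) y (mem_sort _ |>.mp hy)⟩
  rw [← (List.toFinset_sort _ hpair.nodup).mpr (hpair.imp le_of_lt), List.toFinset_append,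
    sort_toFinset, sort_toFinset]

theorem jumps_union (f : ℕ → ℕ) {u v : Finset ℕ} (hu : u.Nonempty) (hv : v.Nonempty)
    (h : ∀ x ∈ u, ∀ y ∈ v, x < y) : jumps f (u ∪ v) =
      jumps f u + jumps f v + if BigJump f (u.max' hu) (v.min' hv) then 1 else 0 := by
  have hu' : u.sort ≠ [] := List.ne_nil_of_mem ((mem_sort _).mpr (u.min'_mem hu))
  have hv' : v.sort ≠ [] := List.ne_nil_of_mem ((mem_sort _).mpr (v.min'_mem hv))
  rw [jumps, sort_union_of_lt h, jumpCount_append f _ _ hu' hv', List.getLast_eq_getElem,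
    List.head_eq_getElem, ← max'_eq_sorted_last, ← min'_eq_sorted_zero]
  rfl

namespace OrderedUnion

variable {U : Ultrafilter FIN}

theorem odd_jumps_mem (hU : OrderedUnion U) (f : ℕ → ℕ) : liftFIN {b | Odd (jumps f b)} ∈ U := by
  by_contra h
  obtain ⟨E, hE, -, hE'⟩ := hU.exists_block_subset (liftFIN_setOf_not_mem h)
  have hEven : ∀ b ∈ finUnions E, Even (jumps f b) := fun b hb => Nat.not_odd_iff_even.mp (hE' hb)
  set L := separatingSeq f ((E 0).max' (hE.1 0) + 2)
  have hL : 0 < L := (Nat.succ_pos _).trans_le (strictMono_separatingSeq f).le_apply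
  have hjump : BigJump f ((E 0).max' (hE.1 0)) ((E L).min' (hE.1 L)) :=
    bigJump_of_separatingSeq_le (hE.le_of_mem ((E L).min'_mem _))
  have hunion := hEven _ (union_mem_finUnions (mem_finUnions_self E 0) (mem_finUnions_self E L))
  rw [jumps_union f (hE.1 0) (hE.1 L) fun x hx y hy => hE.lt_of_lt hL hx hy, if_pos hjump]
    at hunion
  exact Nat.not_even_iff_odd.mpr
    ((hEven _ (mem_finUnions_self E 0)).add (hEven _ (mem_finUnions_self E L))).add_one hunion

theorem exists_separated_block (hU : OrderedUnion U) {W : Set (Finset ℕ)} (hW : liftFIN W ∈ U)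
    (f : ℕ → ℕ) : ∃ D, IsBlockF D ∧ liftFIN (finUnions D) ∈ U ∧ finUnions D ⊆ W ∧
      ∀ k, ∀ y ∈ D k, ∀ x ∈ D (k + 1), f y < x := by
  obtain ⟨D, hD, hDU, hDW⟩ := hU.exists_block_subset (S := W ∩ {b | Odd (jumps f b)})
    (Filter.inter_mem hW (hU.odd_jumps_mem f))
  refine ⟨D, hD, hDU, fun b hb => (hDW hb).1, fun k y hy x hx => ?_⟩
  have hodd : ∀ b ∈ finUnions D, Odd (jumps f b) := fun b hb => (hDW hb).2
  have hjump : BigJump f ((D k).max' (hD.1 k)) ((D (k + 1)).min' (hD.1 (k + 1))) := by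
    by_contra hno
    have hunion :=
      hodd _ (union_mem_finUnions (mem_finUnions_self D k) (mem_finUnions_self D (k + 1)))
    rw [jumps_union f (hD.1 k) (hD.1 (k + 1)) (hD.2 k), if_neg hno, add_zero, Nat.odd_add] at hunion
    exact Nat.not_even_iff_odd.mpr (hodd _ (mem_finUnions_self D (k + 1)))
      (hunion.mp (hodd _ (mem_finUnions_self D k)))
  exact (hjump.apply_lt ((D k).le_max' y hy)).trans_le ((D (k + 1)).min'_le x hx)

end OrderedUnion

theorem Stable.exists_tail_subset {U : Ultrafilter FIN} {ι : Type*} [Countable ι] [Nonempty ι]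
    (hU : Stable U) (hOU : OrderedUnion U) {T : ι → Set (Finset ℕ)}
    (hT : ∀ i, liftFIN (T i) ∈ U) :
    ∃ B, liftFIN (finUnions B) ∈ U ∧ ∀ i, ∃ n, finUnionsAbove B n ⊆ T i := by
  obtain ⟨e, he⟩ := exists_surjective_nat ι
  choose X hX hXU hXT using fun n => hOU.exists_block_subset (hT (e n))
  obtain ⟨B, -, hBU, hBX⟩ := hU X fun n => ⟨hX n, hXU n⟩
  refine ⟨B, hBU, fun i => ?_⟩
  obtain ⟨n, rfl⟩ := he i
  obtain ⟨m, hm⟩ := hBX n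
  exact ⟨m, hm.trans (hXT n)⟩

theorem _root_.Set.Finite.lists_length_le {α : Type*} {P : Set α} (hP : P.Finite) (n : ℕ) :
    {l : List α | l.length ≤ n ∧ ∀ a ∈ l, a ∈ P}.Finite := by
  have := hP.to_subtype
  refine ((List.finite_length_le P n).image (List.map Subtype.val)).subset ?_
  rintro l ⟨hl, hlP⟩
  exact ⟨l.attachWith P hlP, (List.length_attachWith (l := l)).trans_le hl,
    List.attachWith_map_subtype_val hlP⟩

theorem exists_bound_on_bounded_lists (ν : List (Finset ℕ) → ℕ) :
    ∃ g : ℕ → ℕ, ∀ m s, s.length ≤ m + 1 → (∀ a ∈ s, ∀ x ∈ a, x ≤ m) → ν s < g m := by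
  have hfin (m : ℕ) : {s : List (Finset ℕ) | s.length ≤ m + 1 ∧ ∀ a ∈ s, ∀ x ∈ a, x ≤ m}.Finite :=
    ((range (m + 1)).powerset.finite_toSet.lists_length_le (m + 1)).subset
      fun s ⟨hs, hsm⟩ => ⟨hs, fun a ha =>
        mem_powerset.mpr fun x hx => mem_range.mpr (Nat.lt_succ_of_le (hsm a ha x hx))⟩
  choose g hg using fun m => ((hfin m).image ν).bddAbove
  exact ⟨fun m => g m + 1, fun m s hs hsm => Nat.lt_succ_of_le (hg m ⟨s, ⟨hs, hsm⟩, rfl⟩)⟩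

theorem Stable.exists_block_mem_of_prefix {U : Ultrafilter FIN} (hSt : Stable U)
    (hOU : OrderedUnion U)
    {T : List (Finset ℕ) → Set (Finset ℕ)} (hT : ∀ s, liftFIN (T s) ∈ U) :
    ∃ D, IsBlockF D ∧ liftFIN (finUnions D) ∈ U ∧
      ∀ k, D k ∈ T (List.ofFn fun i : Fin k => D i) := by
  obtain ⟨B, hBU, hBT⟩ := hSt.exists_tail_subset hOU hT
  choose ν hν using hBT
  obtain ⟨g, hg⟩ := exists_bound_on_bounded_lists ν
  obtain ⟨D, hD, hDU, hDW, hDsep⟩ := hOU.exists_separated_block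
    (W := finUnions B ∩ {b | ∀ x ∈ b, ν [] < x}) (Filter.inter_mem hBU (hOU.above_mem _)) g
  refine ⟨D, hD, hDU, fun k => hν _ (mem_finUnionsAbove (hDW (mem_finUnions_self D k)).1 ?_)⟩
  cases k with
  | zero => simpa using (hDW (mem_finUnions_self D 0)).2
  | succ k =>
    set m := (D k).max' (hD.1 k)
    intro x hx
    refine (hg m _ ?_ ?_).trans (hDsep k m ((D k).max'_mem _) x hx)
    · simpa using hD.le_of_mem ((D k).max'_mem _)
    · simp only [List.mem_ofFn, forall_exists_index]
      rintro _ i rfl y hy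
      rcases (Nat.lt_succ_iff_lt_or_eq.mp i.isLt) with hi | hi
      · exact (hD.lt_of_lt hi hy ((D k).max'_mem _)).le
      · exact (D k).le_max' y (hi ▸ hy)

theorem _root_.List.getD_of_forall_mem {β : Type*} {P : β → Prop} {l : List β} {d : β}
    (hl : ∀ x ∈ l, P x) (hd : P d) (k : ℕ) : P (l.getD k d) := by
  rw [List.getD_eq_getElem?_getD]
  cases h : l[k]? with
  | none => exact hd
  | some x => exact hl x (List.mem_of_getElem? h)

theorem outcomeOf_getD_append_singleton {α β : Type*} (st : List α → β) (p : List α) (y d : α) :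
    outcomeOf st (fun k => (p ++ [y]).getD k d) p.length = st (p ++ [y]) := by
  rw [outcomeOf]
  congr 1
  refine List.ext_getElem (by simp) fun i _ h => ?_
  rw [List.getElem_ofFn, List.getD_eq_getElem _ _ h]

section ResponseStrategy

variable (U : Ultrafilter FIN) (A : ℕ → Finset ℕ) (α : List (ℕ → Finset ℕ) → Finset ℕ)

def responses (p : List (ℕ → Finset ℕ)) : Set (Finset ℕ) :=
  {b | ∃ Y, (IsBlockF Y ∧ PLEF Y A) ∧ liftFIN (finUnions Y) ∈ U ∧ α (p ++ [Y]) = b}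

open Classical in
noncomputable def responseMove (p : List (ℕ → Finset ℕ)) (b : Finset ℕ) : ℕ → Finset ℕ :=
  if h : b ∈ responses U A α p then h.choose else A

noncomputable def responsePosition (s : List (Finset ℕ)) : List (ℕ → Finset ℕ) :=
  s.foldl (fun p b => p ++ [responseMove U A α p b]) []

variable {U A α}

theorem responseMove_legal (hA : IsBlockF A) (p : List (ℕ → Finset ℕ)) (b : Finset ℕ) :
    IsBlockF (responseMove U A α p b) ∧ PLEF (responseMove U A α p b) A := by
  unfold responseMove
  split_ifs with h
  · exact h.choose_spec.1
  · exact ⟨hA, subset_rfl⟩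

theorem responseMove_spec {p : List (ℕ → Finset ℕ)} {b : Finset ℕ} (h : b ∈ responses U A α p) :
    α (p ++ [responseMove U A α p b]) = b := by
  rw [responseMove, dif_pos h]
  exact h.choose_spec.2.2

theorem responsePosition_append_singleton (s : List (Finset ℕ)) (b : Finset ℕ) :
    responsePosition U A α (s ++ [b]) =
      responsePosition U A α s ++ [responseMove U A α (responsePosition U A α s) b] := by
  simp [responsePosition]

theorem responsePosition_legal (hA : IsBlockF A) (s : List (Finset ℕ)) :
    ∀ Y ∈ responsePosition U A α s, IsBlockF Y ∧ PLEF Y A := by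
  induction s using List.reverseRecOn with
  | nil => simp [responsePosition]
  | append_singleton s b ih =>
    intro Y hY
    rw [responsePosition_append_singleton, List.mem_append, List.mem_singleton] at hY
    rcases hY with hY | rfl
    exacts [ih Y hY, responseMove_legal hA _ b]

theorem responses_mem (hOU : OrderedUnion U) (hA : IsBlockF A) (hAU : liftFIN (finUnions A) ∈ U)
    (hα : IsStratIIF (fun B => IsBlockF B ∧ PLEF B A) α) {p : List (ℕ → Finset ℕ)}
    (hp : ∀ Y ∈ p, IsBlockF Y ∧ PLEF Y A) : liftFIN (responses U A α p) ∈ U := by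
  by_contra h
  obtain ⟨Y, hY, hYU, hYS⟩ :=
    hOU.exists_block_subset (S := {b | b ∉ responses U A α p} ∩ finUnions A)
      (Filter.inter_mem (liftFIN_setOf_not_mem h) hAU)
  have hYA : PLEF Y A := fun b hb => (hYS hb).2
  have hlegal (Z) (hZ : Z ∈ p ++ [Y]) : IsBlockF Z ∧ PLEF Z A :=
    (List.mem_append.mp hZ).elim (hp Z) fun h => List.mem_singleton.mp h ▸ ⟨hY, hYA⟩
  have hplay := (hα _ (List.getD_of_forall_mem hlegal ⟨hA, subset_rfl⟩)).2 p.length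
  rw [outcomeOf_getD_append_singleton, List.getD_append_right _ _ _ _ le_rfl] at hplay
  exact (hYS (by simpa using hplay)).1 ⟨Y, ⟨hY, hYA⟩, hYU, rfl⟩

theorem outcomeOf_responseMove {D : ℕ → Finset ℕ}
    (hD : ∀ k, D k ∈ responses U A α (responsePosition U A α (List.ofFn fun i : Fin k => D i))) :
    outcomeOf α (fun k =>
      responseMove U A α (responsePosition U A α (List.ofFn fun i : Fin k => D i)) (D k)) = D := by
  have hpos (k : ℕ) : (List.ofFn fun i : Fin k =>
      responseMove U A α (responsePosition U A α (List.ofFn fun j : Fin i => D j)) (D i)) =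
      responsePosition U A α (List.ofFn fun i : Fin k => D i) := by
    induction k with
    | zero => simp [responsePosition]
    | succ k ih =>
      simp only [List.ofFn_succ_last, Fin.val_castSucc, Fin.val_last]
      rw [ih, responsePosition_append_singleton]
  funext k
  rw [outcomeOf, hpos, List.ofFn_succ_last, responsePosition_append_singleton]
  exact responseMove_spec (hD k)

end ResponseStrategy

end BlockPaper

/-- A stable ordered-union ultrafilter on `FIN` is strategic. -/
theorem stmt6 (U : Ultrafilter FIN) (hOU : OrderedUnion U) (hSt : Stable U) :
    ∀ A : ℕ → Finset ℕ, IsBlockF A → liftFIN (finUnions A) ∈ U →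
      ∀ α : List (ℕ → Finset ℕ) → Finset ℕ,
        IsStratIIF (fun B => IsBlockF B ∧ PLEF B A) α →
        ∃ Bs : ℕ → ℕ → Finset ℕ, (∀ k, IsBlockF (Bs k) ∧ PLEF (Bs k) A) ∧
          liftFIN (finUnions (outcomeOf α Bs)) ∈ U := by
  intro A hA hAU α hα
  obtain ⟨D, -, hDU, hD⟩ := hSt.exists_block_mem_of_prefix hOU
    fun s => responses_mem hOU hA hAU hα (responsePosition_legal hA s)
  exact ⟨_, fun k => responseMove_legal hA _ _, (outcomeOf_responseMove hD).symm ▸ hDU⟩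
end

section
/- Suppose X ∈ E^[∞] and A ∈ FIN^[∞] are such that A ⪯ supp(X). Then there is Y ∈ E^[∞] such that Y ⪯ X and supp(Y) = A. -/
namespace BlockPaper

variable {F : Type} [Field F]

/-- Entries of a block sequence are order-separated. -/
lemma isBlock_lt {F : Type} [Field F] {X : ℕ → (ℕ →₀ F)} (hX : IsBlock X)
    {m n : ℕ} (hmn : m < n) : ∀ i ∈ (X m).support, ∀ j ∈ (X n).support, i < j := by
  induction n with
  | zero => omega
  | succ n ih =>
    intro i hi j hj
    rcases Nat.lt_succ_iff_lt_or_eq.mp hmn with hlt | rfl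
    · have hne : (X n).support.Nonempty := Finsupp.support_nonempty_iff.mpr (hX.1 n)
      obtain ⟨k, hk⟩ := hne
      exact (ih hlt i hi k hk).trans (hX.2 n k hk j hj)
    · exact hX.2 m i hi j hj

lemma isBlock_disjoint {F : Type} [Field F] {X : ℕ → (ℕ →₀ F)} (hX : IsBlock X)
    {m n : ℕ} (hmn : m ≠ n) : Disjoint (X m).support (X n).support := by
  rw [Finset.disjoint_left]
  intro i him hin
  rcases hmn.lt_or_gt with hlt | hlt
  · exact lt_irrefl i (isBlock_lt hX hlt i him i hin)
  · exact lt_irrefl i (isBlock_lt hX hlt i hin i him)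

lemma support_sum_blocks {F : Type} [Field F] {X : ℕ → (ℕ →₀ F)} (hX : IsBlock X)
    (G : Finset ℕ) : (∑ k ∈ G, X k).support = G.sup (suppSeq X) := by
  rw [Finsupp.support_sum_eq_biUnion _ (fun m n hmn => isBlock_disjoint hX hmn),
    Finset.sup_eq_biUnion]; rfl

end BlockPaper
open BlockPaper in
/-- If `X ∈ E^[∞]`, `A ∈ FIN^[∞]` and `A ⪯ supp(X)`, then there is `Y ∈ E^[∞]` with
`Y ⪯ X` and `supp(Y) = A`. -/
theorem stmt8 {F : Type} [Field F] [Countable F]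
    (X : ℕ → (ℕ →₀ F)) (hX : IsBlock X)
    (A : ℕ → Finset ℕ) (hA : IsBlockF A) (h : PLEF A (suppSeq X)) :
    ∃ Y : ℕ → (ℕ →₀ F), IsBlock Y ∧ PLE Y X ∧ suppSeq Y = A := by
  have hmem : ∀ n, A n ∈ finUnions (suppSeq X) := fun n =>
    h ⟨{n}, Finset.singleton_nonempty n, (Finset.sup_singleton).symm⟩
  choose G hGne hGA using hmem
  refine ⟨fun n => ∑ k ∈ G n, X k, ?_, ?_, ?_⟩
  · constructor
    · intro n hzero
      have := support_sum_blocks hX (G n)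
      rw [show (∑ k ∈ G n, X k) = 0 from hzero, Finsupp.support_zero] at this
      exact absurd ((hGA n) ▸ this.symm) (hA.1 n).ne_empty
    · intro n i hi j hj
      rw [support_sum_blocks hX] at hi hj
      exact hA.2 n i (by rw [hGA n]; exact hi) j (by rw [hGA (n+1)]; exact hj)
  · rintro v ⟨hv0, hv⟩
    refine ⟨hv0, ?_⟩
    refine Submodule.span_le.mpr ?_ hv
    rintro _ ⟨n, rfl⟩
    exact Submodule.sum_mem _ fun k _ => Submodule.subset_span ⟨k, rfl⟩
  · funext n
    rw [suppSeq, support_sum_blocks hX, hGA n]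
end

section
/- Suppose (X_n) is a ⪯*-decreasing sequence in E^[∞] (i.e., X_{n+1} ⪯* X_n for all n) and A ∈ FIN^[∞] is such that A ⪯* supp(X_n) for all n. Then there is Y ∈ E^[∞] such that Y ⪯* X_n for all n and supp(Y) = A. -/
namespace BlockPaper

variable {F : Type} [Field F]

/-- Entries of a block sequence with smaller index have supports entirely below. -/
theorem blockLt {X : ℕ → (ℕ →₀ F)} (hX : IsBlock X) :
    ∀ {k l : ℕ}, k < l → ∀ i ∈ (X k).support, ∀ j ∈ (X l).support, i < j := by
  intro k l hkl
  induction l with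
  | zero => omega
  | succ l ih =>
    intro i hi j hj
    rcases Nat.lt_succ_iff_lt_or_eq.mp hkl with h' | h'
    · obtain ⟨j', hj'⟩ := Finsupp.support_nonempty_iff.mpr (hX.1 l)
      exact lt_trans (ih h' i hi j' hj') (hX.2 l j' hj' j hj)
    · subst h'; exact hX.2 k i hi j hj

/-- Entries of a block sequence in `FIN` with smaller index lie entirely below. -/
theorem blockLtF {A : ℕ → Finset ℕ} (hA : IsBlockF A) :
    ∀ {k l : ℕ}, k < l → ∀ i ∈ A k, ∀ j ∈ A l, i < j := by
  intro k l hkl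
  induction l with
  | zero => omega
  | succ l ih =>
    intro i hi j hj
    rcases Nat.lt_succ_iff_lt_or_eq.mp hkl with h' | h'
    · obtain ⟨j', hj'⟩ := hA.1 l
      exact lt_trans (ih h' i hi j' hj') (hA.2 l j' hj' j hj)
    · subst h'; exact hA.2 k i hi j hj

/-- Entries of a block sequence have pairwise disjoint supports. -/
theorem blockDisj {X : ℕ → (ℕ →₀ F)} (hX : IsBlock X) :
    ∀ k l, k ≠ l → Disjoint (X k).support (X l).support := by
  intro k l hkl
  rw [Finset.disjoint_left]
  intro i hik hil
  rcases hkl.lt_or_gt with h' | h'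
  · exact lt_irrefl i (blockLt hX h' i hik i hil)
  · exact lt_irrefl i (blockLt hX h' i hil i hik)

/-- The support of a sum of entries of a block sequence is the union of the supports. -/
theorem sumSupport {X : ℕ → (ℕ →₀ F)} (hX : IsBlock X) (G : Finset ℕ) :
    (∑ j ∈ G, X j).support = G.sup fun j => (X j).support := by
  rw [Finset.sup_eq_biUnion]
  exact Finsupp.support_sum_eq_biUnion G (fun k l h' => blockDisj hX k l h')

/-- If a vector in the span of a block sequence has support above `T`, it is in the
span of the entries with support above `T`. -/
theorem keySpan {X : ℕ → (ℕ →₀ F)} (hX : IsBlock X) {v : ℕ →₀ F} {T : ℕ}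
    (hv : v ∈ Submodule.span F (Set.range X)) (hsupp : ∀ i ∈ v.support, T < i) :
    v ∈ Submodule.span F {x : ℕ →₀ F | (∃ k, X k = x) ∧ ∀ i ∈ x.support, T < i} := by
  rw [Finsupp.mem_span_range_iff_exists_finsupp] at hv
  obtain ⟨c, hc⟩ := hv
  have hgen : ∀ k ∈ c.support, ∀ i ∈ (X k).support, T < i := by
    intro k hk i hi
    by_contra hTi
    push_neg at hTi
    have hvi : v i ≠ 0 := by
      rw [← hc, Finsupp.sum_apply, Finsupp.sum, Finset.sum_eq_single k]
      · simp only [Finsupp.smul_apply, smul_eq_mul]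
        exact mul_ne_zero (Finsupp.mem_support_iff.mp hk) (Finsupp.mem_support_iff.mp hi)
      · intro l hl hlk
        have hnot : i ∉ (X l).support :=
          Finset.disjoint_right.mp (blockDisj hX l k hlk) hi
        rw [Finsupp.notMem_support_iff] at hnot
        simp [hnot]
      · intro hk'; exact absurd hk hk'
    exact absurd (hsupp i (Finsupp.mem_support_iff.mpr hvi)) (not_lt.mpr hTi)
  rw [← hc, Finsupp.sum]
  apply Submodule.sum_mem
  intro k hk
  exact Submodule.smul_mem _ _ (Submodule.subset_span ⟨⟨k, rfl⟩, hgen k hk⟩)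

end BlockPaper
open BlockPaper in
/-- If `(X_n)` is a `⪯*`-decreasing sequence in `E^[∞]` and `A ∈ FIN^[∞]` satisfies
`A ⪯* supp(X_n)` for all `n`, then there is `Y ∈ E^[∞]` with `Y ⪯* X_n` for all `n`
and `supp(Y) = A`. -/
theorem stmt9 {F : Type} [Field F] [Countable F]
    (Xs : ℕ → ℕ → (ℕ →₀ F)) (hXs : ∀ n, IsBlock (Xs n))
    (hdec : ∀ n, PLEs (Xs (n + 1)) (Xs n))
    (A : ℕ → Finset ℕ) (hA : IsBlockF A) (h : ∀ n, PLEsF A (suppSeq (Xs n))) :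
    ∃ Y : ℕ → (ℕ →₀ F), IsBlock Y ∧ (∀ n, PLEs Y (Xs n)) ∧ suppSeq Y = A := by
  classical
  choose m hm using hdec
  choose p hp using h
  set M : ℕ → ℕ := fun n => (Finset.range (n + 1)).sup fun i => max (m i) (p i) with hMdef
  have hMm : ∀ j n, j ≤ n → m j ≤ M n := by
    intro j n hj
    have hmem : j ∈ Finset.range (n + 1) := Finset.mem_range.mpr (Nat.lt_succ_of_le hj)
    exact le_trans (le_max_left _ _) (Finset.le_sup (f := fun i => max (m i) (p i)) hmem)
  have hMp : ∀ j n, j ≤ n → p j ≤ M n := by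
    intro j n hj
    have hmem : j ∈ Finset.range (n + 1) := Finset.mem_range.mpr (Nat.lt_succ_of_le hj)
    exact le_trans (le_max_right _ _) (Finset.le_sup (f := fun i => max (m i) (p i)) hmem)
  have hMmono : Monotone M := fun a b hab =>
    Finset.sup_mono (Finset.range_subset_range.mpr (by omega))
  -- pointwise construction of the entries of Y
  have exY : ∀ k, ∃ y : ℕ →₀ F, y.support = A k ∧
      ∀ n, n ≤ k → M n < (A k).min' (hA.1 k) → y ∈ spanSet (Xs n) := by
    intro k
    by_cases h0 : M 0 < (A k).min' (hA.1 k)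
    · set P : ℕ → Prop := fun n => M n < (A k).min' (hA.1 k) with hP
      set ν := Nat.findGreatest P k with hν
      have hPν : P ν := Nat.findGreatest_spec (Nat.zero_le k) h0
      have hAk : A k ∈ finUnions (suppSeq (Xs ν)) := by
        apply hp ν
        refine ⟨{k}, Finset.singleton_nonempty k, ?_, by simp⟩
        intro k' hk' i hi
        rw [Finset.mem_singleton] at hk'
        rw [hk'] at hi
        exact lt_of_le_of_lt (hMp ν ν le_rfl) (lt_of_lt_of_le hPν ((A k).min'_le i hi))
      obtain ⟨G, hGne, hGA⟩ := hAk
      have hsupp : (∑ j ∈ G, Xs ν j).support = A k := by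
        rw [sumSupport (hXs ν) G]; exact hGA.symm
      have hnz : (∑ j ∈ G, Xs ν j) ≠ 0 := by
        rw [← Finsupp.support_nonempty_iff, hsupp]; exact hA.1 k
      have habove : ∀ i ∈ (∑ j ∈ G, Xs ν j).support, M ν < i := by
        intro i hi
        rw [hsupp] at hi
        exact lt_of_lt_of_le hPν ((A k).min'_le i hi)
      have hbase : (∑ j ∈ G, Xs ν j) ∈ spanSet (Xs ν) := by
        refine ⟨hnz, Submodule.sum_mem _ fun j _ => Submodule.subset_span ⟨j, rfl⟩⟩
      have hdown : ∀ d, (∑ j ∈ G, Xs ν j) ∈ spanSet (Xs (ν - d)) := by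
        intro d
        induction d with
        | zero => exact hbase
        | succ d ih =>
          rcases Nat.eq_zero_or_pos (ν - d) with h' | h'
          · have he : ν - (d + 1) = ν - d := by omega
            rw [he]; exact ih
          · have hd : ν - d = (ν - (d + 1)) + 1 := by omega
            set j := ν - (d + 1) with hj
            rw [hd] at ih
            have hjν : j ≤ ν := by omega
            have hkey := keySpan (hXs (j + 1)) ih.2
              (fun i hi => lt_of_le_of_lt (hMm j ν hjν) (habove i hi))
            exact hm j ⟨hnz, hkey⟩
      refine ⟨∑ j ∈ G, Xs ν j, hsupp, ?_⟩
      intro n hn hPn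
      have hnν : n ≤ ν := Nat.le_findGreatest hn hPn
      have := hdown (ν - n)
      rwa [Nat.sub_sub_self hnν] at this
    · refine ⟨∑ i ∈ A k, Finsupp.single i (1 : F), ?_, ?_⟩
      · rw [Finsupp.support_sum_eq_biUnion]
        · ext i
          simp [Finsupp.support_single_ne_zero _ (one_ne_zero (α := F))]
        · intro i j hij
          rw [Finsupp.support_single_ne_zero _ (one_ne_zero (α := F)),
            Finsupp.support_single_ne_zero _ (one_ne_zero (α := F))]
          exact Finset.disjoint_singleton.mpr hij
      · intro n _ hPn
        exact absurd (lt_of_le_of_lt (hMmono (Nat.zero_le n)) hPn) h0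
  choose Y hYsupp hYspan using exY
  refine ⟨Y, ⟨?_, ?_⟩, ?_, ?_⟩
  · intro n
    rw [← Finsupp.support_nonempty_iff, hYsupp n]
    exact hA.1 n
  · intro n i hi j hj
    rw [hYsupp] at hi hj
    exact hA.2 n i hi j hj
  · intro n
    refine ⟨max (M n) ((A n).sup id), ?_⟩
    rintro v ⟨hv0, hv⟩
    refine ⟨hv0, ?_⟩
    refine Submodule.span_le.mpr ?_ hv
    rintro x ⟨⟨k, rfl⟩, hxs⟩
    rw [hYsupp k] at hxs
    have hnk : n < k := by
      by_contra hc
      push_neg at hc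
      obtain ⟨i, hi⟩ := hA.1 k
      have h1 : (A n).sup id < i := lt_of_le_of_lt (le_max_right _ _) (hxs i hi)
      have h2 : i ≤ (A n).sup id := by
        rcases eq_or_lt_of_le hc with h' | h'
        · subst h'; exact Finset.le_sup (f := id) hi
        · obtain ⟨j, hj⟩ := hA.1 n
          exact le_trans (le_of_lt (blockLtF hA h' i hi j hj)) (Finset.le_sup (f := id) hj)
      omega
    have hmin : M n < (A k).min' (hA.1 k) :=
      lt_of_le_of_lt (le_max_left _ _) (hxs _ (Finset.min'_mem _ _))
    exact (hYspan k n (le_of_lt hnk) hmin).2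
  · funext k
    exact hYsupp k
end

section
/- Let F be a filter on E generated by infinite-dimensional subspaces. The following are equivalent: (i) F is subspace maximal; (ii) for every linear subspace V of E, either V ∈ F or there is a direct complement V' of V (i.e., V ∩ V' = {0} and V + V' = E) such that V' ∈ F; (iii) for every F-linear transformation T from E to any F-vector space, either ker(T) ∈ F or there is a linear subspace X of E with X ∈ F such that the restriction of T to X is injective. -/
section Aux


variable {F : Type} [Field F]

lemma not_finite_E : ¬ Module.Finite F (ℕ →₀ F) := by
  intro h
  have h1 : Module.rank F (ℕ →₀ F) < Cardinal.aleph0 := Module.rank_lt_aleph0 F _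
  rw [rank_finsupp_self'] at h1
  simp at h1

lemma exists_ne_zero {E : Type} [AddCommGroup E] [Module F E] {V : Submodule F E}
    (hV : ¬ Module.Finite F V) : ∃ v ∈ V, v ≠ (0 : E) := by
  by_contra h
  push_neg at h
  have : V = ⊥ := by
    ext x; simp only [Submodule.mem_bot]
    exact ⟨fun hx => h x hx, fun hx => hx ▸ V.zero_mem⟩
  exact hV (this ▸ inferInstanceAs (Module.Finite F (⊥ : Submodule F E)))

/-- If `Q` has finite codimension and `W` is infinite-dimensional, then `W ⊓ Q` is
infinite-dimensional. -/
lemma not_finite_inf {E : Type} [AddCommGroup E] [Module F E] {Q W : Submodule F E}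
    (hQ : Module.Finite F (E ⧸ Q)) (hW : ¬ Module.Finite F W) :
    ¬ Module.Finite F ↥(W ⊓ Q) := by
  intro hfin
  apply hW
  set f : W →ₗ[F] E ⧸ Q := Q.mkQ.comp W.subtype with hf
  have hker : LinearMap.ker f = Submodule.comap W.subtype (W ⊓ Q) := by
    ext ⟨x, hx⟩
    simp [hf, Submodule.Quotient.mk_eq_zero, hx]
  have hkfin : Module.Finite F ↥(LinearMap.ker f) := by
    rw [hker]
    exact Module.Finite.equiv (Submodule.comapSubtypeEquivOfLe inf_le_left).symm
  have hrfin : Module.Finite F ↥(LinearMap.range f) := by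
    haveI := hQ
    infer_instance
  have h1 : (Submodule.map f ⊤).FG := by
    rw [Submodule.map_top]
    exact Module.Finite.iff_fg.mp hrfin
  have h2 : (⊤ ⊓ LinearMap.ker f).FG := by
    rw [top_inf_eq]
    exact Module.Finite.iff_fg.mp hkfin
  have h3 : (⊤ : Submodule F W).FG := Submodule.fg_of_fg_map_of_fg_inf_ker f h1 h2
  exact Module.finite_def.mpr h3

/-- Extend a subspace disjoint from `V` to a full complement of `V`. -/
lemma extend_compl {E : Type} [AddCommGroup E] [Module F E] {U V : Submodule F E}
    (h : U ⊓ V = ⊥) : ∃ V' : Submodule F E, U ≤ V' ∧ IsCompl V V' := by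
  obtain ⟨W, hW⟩ := Submodule.exists_isCompl (V ⊔ U)
  refine ⟨U ⊔ W, le_sup_left, ?_, ?_⟩
  · rw [disjoint_iff]
    rw [eq_bot_iff]
    rintro x ⟨hxV, hxUW⟩
    obtain ⟨u, hu, w, hw, rfl⟩ := Submodule.mem_sup.mp hxUW
    have hwmem : w ∈ (V ⊔ U) ⊓ W := by
      constructor
      · have : w = (u + w) - u := by abel
        rw [this]
        exact Submodule.sub_mem _ (Submodule.mem_sup_left hxV) (Submodule.mem_sup_right hu)
      · exact hw
    rw [disjoint_iff.mp hW.disjoint] at hwmem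
    rw [Submodule.mem_bot] at hwmem
    subst hwmem
    have : u + 0 ∈ U ⊓ V := ⟨by simpa using hu, hxV⟩
    rw [h, Submodule.mem_bot] at this
    simp [this]
  · rw [codisjoint_iff]
    rw [← sup_assoc]
    rw [sup_comm V U] at hW ⊢
    exact codisjoint_iff.mp hW.codisjoint


end Aux




open BlockPaper

/-- A (proper) filter on `E` generated by infinite-dimensional linear subspaces. -/
structure SubspaceFilter (F : Type) [Field F] where
  sets : Set (Set (ℕ →₀ F))
  proper : ∅ ∉ sets
  upward : ∀ S ∈ sets, ∀ T : Set (ℕ →₀ F), S ⊆ T → T ∈ sets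
  inter : ∀ S ∈ sets, ∀ T ∈ sets, S ∩ T ∈ sets
  base : ∀ S ∈ sets, ∃ V : Submodule F (ℕ →₀ F), ¬ Module.Finite F V ∧
    (V : Set (ℕ →₀ F)) ∈ sets ∧ (V : Set (ℕ →₀ F)) ⊆ S

/-- `𝓕` is subspace maximal: every infinite-dimensional subspace meeting each member
of `𝓕` in a nonzero vector belongs to `𝓕`. -/
def SubspaceMaximal {F : Type} [Field F] (𝓕 : SubspaceFilter F) : Prop :=
  ∀ V : Submodule F (ℕ →₀ F), ¬ Module.Finite F V →
    (∀ S ∈ 𝓕.sets, ∃ v ∈ (V : Set (ℕ →₀ F)) ∩ S, v ≠ 0) →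
    (V : Set (ℕ →₀ F)) ∈ 𝓕.sets

/-- Equivalent characterizations of subspace maximality: direct complements, and
kernels/injectivity of linear transformations. -/


theorem stmt11 {F : Type} [Field F] [Countable F] (𝓕 : SubspaceFilter F) :
    (SubspaceMaximal 𝓕 ↔
      ∀ V : Submodule F (ℕ →₀ F), (V : Set (ℕ →₀ F)) ∈ 𝓕.sets ∨
        ∃ V' : Submodule F (ℕ →₀ F), IsCompl V V' ∧ (V' : Set (ℕ →₀ F)) ∈ 𝓕.sets) ∧
    (SubspaceMaximal 𝓕 ↔
      ∀ (W : Type) [AddCommGroup W] [Module F W], ∀ T : (ℕ →₀ F) →ₗ[F] W,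
        (LinearMap.ker T : Set (ℕ →₀ F)) ∈ 𝓕.sets ∨
        ∃ X : Submodule F (ℕ →₀ F), (X : Set (ℕ →₀ F)) ∈ 𝓕.sets ∧
          Set.InjOn (fun v => T v) (X : Set (ℕ →₀ F))) := by
  -- (i) → (ii)
  have h12 : SubspaceMaximal 𝓕 →
      ∀ V : Submodule F (ℕ →₀ F), (V : Set (ℕ →₀ F)) ∈ 𝓕.sets ∨
        ∃ V' : Submodule F (ℕ →₀ F), IsCompl V V' ∧ (V' : Set (ℕ →₀ F)) ∈ 𝓕.sets := by
    intro hmax V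
    have htop : ((⊤ : Submodule F (ℕ →₀ F)) : Set (ℕ →₀ F)) ∈ 𝓕.sets := by
      apply hmax ⊤
      · intro hfin
        exact not_finite_E (F := F) (Module.Finite.equiv (Submodule.topEquiv))
      · intro S hS
        obtain ⟨U, hUinf, hUsets, hUsub⟩ := 𝓕.base S hS
        obtain ⟨v, hvU, hv0⟩ := exists_ne_zero hUinf
        exact ⟨v, ⟨trivial, hUsub hvU⟩, hv0⟩
    by_cases hV : Module.Finite F V
    · -- V finite-dimensional: build a complement in the filter
      obtain ⟨U, hUinf, hUsets, -⟩ := 𝓕.base _ htop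
      haveI := hV
      haveI : Module.Finite F ↥(U ⊓ V) :=
        Submodule.finiteDimensional_of_le (inf_le_right : U ⊓ V ≤ V)
      obtain ⟨Q, hQ⟩ := Submodule.exists_isCompl (U ⊓ V)
      have hEQ : Module.Finite F ((ℕ →₀ F) ⧸ Q) :=
        Module.Finite.equiv (Submodule.quotientEquivOfIsCompl Q (U ⊓ V) hQ.symm).symm
      have hU'inf : ¬ Module.Finite F ↥(U ⊓ Q) := not_finite_inf hEQ hUinf
      have hU'sets : ((U ⊓ Q : Submodule F (ℕ →₀ F)) : Set (ℕ →₀ F)) ∈ 𝓕.sets := by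
        apply hmax _ hU'inf
        intro S hS
        have hSU : S ∩ (U : Set (ℕ →₀ F)) ∈ 𝓕.sets := 𝓕.inter S hS _ hUsets
        obtain ⟨Wb, hWinf, hWsets, hWsub⟩ := 𝓕.base _ hSU
        have hWU : Wb ≤ U := fun x hx => (hWsub hx).2
        obtain ⟨v, hv, hv0⟩ := exists_ne_zero (not_finite_inf hEQ hWinf)
        exact ⟨v, ⟨⟨hWU hv.1, hv.2⟩, (hWsub hv.1).1⟩, hv0⟩
      have hdisj : (U ⊓ Q) ⊓ V = ⊥ := by
        rw [eq_bot_iff]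
        rintro x ⟨⟨hxU, hxQ⟩, hxV⟩
        have hx : x ∈ (U ⊓ V) ⊓ Q := ⟨⟨hxU, hxV⟩, hxQ⟩
        rwa [disjoint_iff.mp hQ.disjoint] at hx
      obtain ⟨V', hle, hcompl⟩ := extend_compl hdisj
      exact Or.inr ⟨V', hcompl, 𝓕.upward _ hU'sets _ (fun x hx => hle hx)⟩
    · by_cases hmeets : ∀ S ∈ 𝓕.sets, ∃ v ∈ (V : Set (ℕ →₀ F)) ∩ S, v ≠ 0
      · exact Or.inl (hmax V hV hmeets)
      · push_neg at hmeets
        obtain ⟨S, hS, hSdisj⟩ := hmeets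
        obtain ⟨U, hUinf, hUsets, hUsub⟩ := 𝓕.base S hS
        have hdisj : U ⊓ V = ⊥ := by
          rw [eq_bot_iff]
          rintro x ⟨hxU, hxV⟩
          rw [Submodule.mem_bot]
          exact hSdisj x ⟨hxV, hUsub hxU⟩
        obtain ⟨V', hle, hcompl⟩ := extend_compl hdisj
        exact Or.inr ⟨V', hcompl, 𝓕.upward _ hUsets _ (fun x hx => hle hx)⟩
  -- (ii) → (i)
  have h21 : (∀ V : Submodule F (ℕ →₀ F), (V : Set (ℕ →₀ F)) ∈ 𝓕.sets ∨
        ∃ V' : Submodule F (ℕ →₀ F), IsCompl V V' ∧ (V' : Set (ℕ →₀ F)) ∈ 𝓕.sets) →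
      SubspaceMaximal 𝓕 := by
    intro h2 V hVinf hmeets
    rcases h2 V with h | ⟨V', hc, hV'⟩
    · exact h
    · obtain ⟨v, ⟨hvV, hvV'⟩, hv0⟩ := hmeets _ hV'
      have hv : v ∈ V ⊓ V' := ⟨hvV, hvV'⟩
      rw [disjoint_iff.mp hc.disjoint, Submodule.mem_bot] at hv
      exact absurd hv hv0
  -- (ii) → (iii)
  have h23 : (∀ V : Submodule F (ℕ →₀ F), (V : Set (ℕ →₀ F)) ∈ 𝓕.sets ∨
        ∃ V' : Submodule F (ℕ →₀ F), IsCompl V V' ∧ (V' : Set (ℕ →₀ F)) ∈ 𝓕.sets) →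
      ∀ (W : Type) [AddCommGroup W] [Module F W], ∀ T : (ℕ →₀ F) →ₗ[F] W,
        (LinearMap.ker T : Set (ℕ →₀ F)) ∈ 𝓕.sets ∨
        ∃ X : Submodule F (ℕ →₀ F), (X : Set (ℕ →₀ F)) ∈ 𝓕.sets ∧
          Set.InjOn (fun v => T v) (X : Set (ℕ →₀ F)) := by
    intro h2 W _ _ T
    rcases h2 (LinearMap.ker T) with h | ⟨V', hc, hV'⟩
    · exact Or.inl h
    · refine Or.inr ⟨V', hV', ?_⟩
      intro u hu v hv huv
      have hsub : u - v ∈ LinearMap.ker T ⊓ V' := by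
        refine ⟨?_, Submodule.sub_mem _ hu hv⟩
        show T (u - v) = 0
        rw [map_sub, sub_eq_zero]
        exact huv
      rw [disjoint_iff.mp hc.disjoint, Submodule.mem_bot, sub_eq_zero] at hsub
      exact hsub
  -- (iii) → (ii)
  have h32 : (∀ (W : Type) [AddCommGroup W] [Module F W], ∀ T : (ℕ →₀ F) →ₗ[F] W,
        (LinearMap.ker T : Set (ℕ →₀ F)) ∈ 𝓕.sets ∨
        ∃ X : Submodule F (ℕ →₀ F), (X : Set (ℕ →₀ F)) ∈ 𝓕.sets ∧
          Set.InjOn (fun v => T v) (X : Set (ℕ →₀ F))) →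
      ∀ V : Submodule F (ℕ →₀ F), (V : Set (ℕ →₀ F)) ∈ 𝓕.sets ∨
        ∃ V' : Submodule F (ℕ →₀ F), IsCompl V V' ∧ (V' : Set (ℕ →₀ F)) ∈ 𝓕.sets := by
    intro h3 V
    rcases h3 ((ℕ →₀ F) ⧸ V) V.mkQ with h | ⟨X, hX, hinj⟩
    · rw [Submodule.ker_mkQ] at h
      exact Or.inl h
    · have hdisj : X ⊓ V = ⊥ := by
        rw [eq_bot_iff]
        rintro x ⟨hxX, hxV⟩
        rw [Submodule.mem_bot]
        have h0 : V.mkQ x = V.mkQ 0 := by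
          rw [map_zero, Submodule.mkQ_apply, Submodule.Quotient.mk_eq_zero]
          exact hxV
        exact hinj hxX X.zero_mem h0
      obtain ⟨V', hle, hcompl⟩ := extend_compl hdisj
      exact Or.inr ⟨V', hcompl, 𝓕.upward _ hX _ (fun x hx => hle hx)⟩
  exact ⟨⟨h12, h21⟩, ⟨fun h => h23 (h12 h), fun h => h21 (h32 h)⟩⟩
end

section
/- A block filter F on E is full if and only if for every A ⊆ E∖{0} there is ⟨X⟩ ∈ F such that either ⟨X⟩ ∩ A = ∅ or A is asymptotic below ⟨X⟩. -/
open BlockPaper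

/-- `A` is asymptotic below `⟨X⟩`: every infinite-dimensional subspace `V` with
`V ∖ {0} ⊆ ⟨X⟩` meets `A`. -/
def AsympBelow {F : Type} [Field F] (A : Set (ℕ →₀ F)) (X : ℕ → (ℕ →₀ F)) : Prop :=
  ∀ V : Submodule F (ℕ →₀ F), ¬ Module.Finite F V →
    (V : Set (ℕ →₀ F)) \ {0} ⊆ spanSet X → ((V : Set (ℕ →₀ F)) ∩ A).Nonempty

/-- A block filter `𝓕` on `E` is full iff for every `A ⊆ E ∖ {0}` there is `⟨X⟩ ∈ 𝓕`
such that either `⟨X⟩ ∩ A = ∅` or `A` is asymptotic below `⟨X⟩`. -/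
theorem stmt12 {F : Type} [Field F] [Countable F] (𝓕 : BlockFilter F) :
    Full 𝓕 ↔ ∀ A : Set (ℕ →₀ F), (∀ v ∈ A, v ≠ 0) →
      ∃ X : ℕ → (ℕ →₀ F), IsBlock X ∧ spanSet X ∈ 𝓕.sets ∧
        (spanSet X ∩ A = ∅ ∨ AsympBelow A X) := by
  constructor
  · intro hFull A hA
    by_cases hD : FDense 𝓕 {v : ℕ →₀ F | v ≠ 0 ∧ v ∉ A}
    · have hmem := hFull _ hD
      obtain ⟨X, hX, hXs, hXsub⟩ := 𝓕.blockBase _ hmem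
      refine ⟨X, hX, hXs, Or.inl ?_⟩
      ext v
      simp only [Set.mem_inter_iff, Set.mem_empty_iff_false, iff_false, not_and]
      intro hv hvA
      exact (hXsub hv).1.2 hvA
    · simp only [FDense, not_forall, not_exists] at hD
      obtain ⟨X, hX, hXs, hV⟩ := hD
      refine ⟨X, hX, hXs, Or.inr ?_⟩
      intro V hVinf hVsub
      by_contra hne
      rw [Set.not_nonempty_iff_eq_empty] at hne
      exact hV V ⟨hVinf, fun v hv => ⟨hVsub hv, (hVsub hv).1, fun hvA =>
        Set.eq_empty_iff_forall_notMem.mp hne v ⟨hv.1, hvA⟩⟩⟩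
  · intro hRHS D hD
    obtain ⟨X, hX, hXs, hcase⟩ := hRHS {v : ℕ →₀ F | v ≠ 0 ∧ v ∉ D} (fun v hv => hv.1)
    rcases hcase with hempty | hasymp
    · refine 𝓕.upward _ hXs (D \ {0}) (fun v hv => hv.2) ?_
      intro v hv
      have hvne : v ≠ 0 := hv.1
      refine ⟨?_, hvne⟩
      by_contra hvD
      have : v ∈ spanSet X ∩ {v : ℕ →₀ F | v ≠ 0 ∧ v ∉ D} := ⟨hv, hvne, hvD⟩
      rw [hempty] at this
      exact this
    · obtain ⟨V, hVinf, hVsub⟩ := hD X hX hXs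
      obtain ⟨v, hvV, hvne, hvD⟩ := hasymp V hVinf (fun w hw => (hVsub hw).1)
      exact absurd (hVsub ⟨hvV, fun h => hvne (by simpa using h)⟩).2 hvD
end
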